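/- arXiv:2309.03637 — 3 statements merged into one kernel-verified Lean document; each statement's English description precedes it below -/
import Mathlib

section
/- Let κ ∈ (0,1/2) and define 𝒰^κ := {(a1,a2) ∈ T×ℂ : |Im a2| < κ(|a1| + |Re a2|) and |Im a2| < π/2}. Then 𝒰^κ is a subset of 𝒰 := {a ∈ T×ℂ : cosh(a2) − cos(a1) ≠ 0}, the boundaries satisfy ∂𝒰^κ ∩ ∂𝒰 = {0}, and there exists a constant C > 0 depending only on κ such that for all a ∈ 𝒰^κ and j = 0, 1, 2: |∂_{a2}^j K2(a)| ≤ C |a|_*^{−(1+j)}. -/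
open MeasureTheory Real Set

noncomputable section

namespace MIPM

/-- The horizontal strip `U_r ⊆ ℂ`. -/
def U (r : ℝ) : Set ℂ := {z : ℂ | |z.im| < r}

/-- The domain `Ω_r = U_r × (-2,2)`. -/
def Om (r : ℝ) : Set (ℂ × ℝ) := {p | |p.1.im| < r ∧ p.2 ∈ Ioo (-2:ℝ) 2}

/-- Fundamental domain for `𝕋 × (-2,2)` inside `ℝ²`. -/
def Om0 : Set (ℝ × ℝ) := Ioc (-π) π ×ˢ Ioo (-2:ℝ) 2

/-- Fundamental domain for `𝕋 × ℝ` inside `ℝ²`. -/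
def D2 : Set (ℝ × ℝ) := Ioc (-π) π ×ˢ (univ : Set ℝ)

/-- `|z1|` on the torus `ℝ/2πℤ`: absolute value of the representative in `[-π,π)`. -/
def tAbs (x : ℝ) : ℝ := |x - 2*π*⌊(x+π)/(2*π)⌋|

/-- The norm `|a|_*` on `𝕋 × ℂ`. -/
def starNorm (a1 : ℝ) (a2 : ℂ) : ℝ := Real.sqrt ((tAbs a1)^2 + ‖a2‖^2)

/-- Second component of the Biot–Savart kernel, complex extension. -/
def K2 (a1 : ℝ) (a2 : ℂ) : ℂ :=
  ((1/(4*π) : ℝ) : ℂ) * Complex.sin (a1 : ℂ) / (Complex.cosh a2 - Complex.cos (a1 : ℂ))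

/-- The Biot–Savart kernel on `𝕋 × ℝ`. -/
def K (z : ℝ × ℝ) : ℝ × ℝ :=
  ((4*π) * (Real.cosh z.2 - Real.cos z.1))⁻¹ • ((-Real.sinh z.2, Real.sin z.1) : ℝ × ℝ)

/-- `∂_{y1}` : complex derivative in the first variable. -/
def dy1 (η : ℂ → ℝ → ℂ) (p : ℂ × ℝ) : ℂ := deriv (fun w => η w p.2) p.1

/-- `∂_{y2}` : real derivative in the second variable. -/
def dy2 (η : ℂ → ℝ → ℂ) (p : ℂ × ℝ) : ℂ := deriv (fun s => η p.1 s) p.2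

/-- Membership in the Banach space `B_r`:  a `2π`-periodic real-valued function on
`𝕋 × (-2,2)` whose extension is holomorphic in the first variable on `U_r`, whose
`y2`-derivative exists on `Ω_r`, is uniformly continuous and holomorphic in the first
variable, and with finite norm. -/
structure MemB (r : ℝ) (η : ℂ → ℝ → ℂ) : Prop where
  periodic : ∀ z y2, η (z + 2*π) y2 = η z y2
  realOnReal : ∀ (x : ℝ) (y2 : ℝ), (η (x:ℂ) y2).im = 0
  contOn : ContinuousOn (fun p : ℂ × ℝ => η p.1 p.2) (Om r)
  holo1 : ∀ y2 ∈ Ioo (-2:ℝ) 2, DifferentiableOn ℂ (fun z => η z y2) (U r)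
  diff2 : ∀ p ∈ Om r, DifferentiableAt ℝ (fun s => η p.1 s) p.2
  ucont2 : UniformContinuousOn (dy2 η) (Om r)
  holo12 : ∀ y2 ∈ Ioo (-2:ℝ) 2, DifferentiableOn ℂ (fun z => dy2 η (z, y2)) (U r)
  bdd : BddAbove ((fun p => ‖η p.1 p.2‖ + ‖dy1 η p‖
          + ‖dy2 η p‖) '' Om r)

/-- Sup norm of a nonnegative quantity over a set. -/
def supOn (f : ℂ × ℝ → ℝ) (s : Set (ℂ × ℝ)) : ℝ := sSup (f '' s)

/-- The norm of `B_r`. -/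
def Bnorm (r : ℝ) (η : ℂ → ℝ → ℂ) : ℝ :=
  supOn (fun p => ‖η p.1 p.2‖) (Om r)
  + supOn (fun p => ‖dy1 η p‖) (Om r)
  + supOn (fun p => ‖dy2 η p‖) (Om r)

/-- Hypotheses on the (complex extension of the) initial interface `γ0`:
`2π`-periodic, real on the reals, holomorphic on `U_{2 r0}` and `4‖Im γ0'‖_{L∞(U_{r0})} < 1`. -/
structure GoodGamma (r0 : ℝ) (γ : ℂ → ℂ) : Prop where
  pos : 0 < r0
  periodic : ∀ z, γ (z + 2*π) = γ z
  realOnReal : ∀ x : ℝ, (γ (x:ℂ)).im = 0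
  holo : DifferentiableOn ℂ γ (U (2*r0))
  small : ∃ c < (1:ℝ), ∀ z ∈ U r0, 4 * |(deriv γ z).im| ≤ c

/-- Complex extension of the initial normal velocity `s0`. -/
def s0C (γ : ℂ → ℂ) (y1 : ℂ) : ℂ :=
  -2 * ∫ z1 in Ioc (-π) π,
      K2 z1 (γ y1 - γ (y1 - (z1:ℂ))) * (deriv γ y1 - deriv γ (y1 - (z1:ℂ)))

/-- `f_t^η(y) = γ0(y1) + t s0(y1) + (1/2) t^{1+α} η(y)`. -/
def fC (γ : ℂ → ℂ) (α : ℝ) (η : ℂ → ℝ → ℂ) (t : ℝ) (y1 : ℂ) (y2 : ℝ) : ℂ :=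
  γ y1 + (t:ℂ) * s0C γ y1 + (1/2 : ℂ) * ((t ^ (1+α) : ℝ) : ℂ) * η y1 y2

/-- `∂_{y1} f_t^η`. -/
def dfC (γ : ℂ → ℂ) (α : ℝ) (η : ℂ → ℝ → ℂ) (t : ℝ) (y1 : ℂ) (y2 : ℝ) : ℂ :=
  deriv γ y1 + (t:ℂ) * deriv (s0C γ) y1
    + (1/2 : ℂ) * ((t ^ (1+α) : ℝ) : ℂ) * deriv (fun w => η w y2) y1

/-- Second component of `ΔX_t^η(y,z)`. -/
def DX2 (γ : ℂ → ℂ) (α : ℝ) (η : ℂ → ℝ → ℂ) (t : ℝ) (y1 : ℂ) (y2 : ℝ) (z : ℝ × ℝ) : ℂ :=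
  (t:ℂ) * ((y2:ℂ) - (z.2:ℂ)) + (fC γ α η t y1 y2 - fC γ α η t (y1 - (z.1:ℂ)) z.2)

/-- `Δ∂_{y1} f_t^η (y,z)`. -/
def DdfC (γ : ℂ → ℂ) (α : ℝ) (η : ℂ → ℝ → ℂ) (t : ℝ) (y1 : ℂ) (y2 : ℝ) (z : ℝ × ℝ) : ℂ :=
  dfC γ α η t y1 y2 - dfC γ α η t (y1 - (z.1:ℂ)) z.2

/-- The nonlinear map `F` of the fixed point problem. -/
def Fmap (γ : ℂ → ℂ) (α : ℝ) (η : ℂ → ℝ → ℂ) (t : ℝ) (y1 : ℂ) (y2 : ℝ) : ℂ :=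
  if t = 0 then 0 else
  -∫ z in Om0,
     (K2 z.1 (DX2 γ α η t y1 y2 z) * DdfC γ α η t y1 y2 z
      - K2 z.1 (γ y1 - γ (y1 - (z.1:ℂ))) * (deriv γ y1 - deriv γ (y1 - (z.1:ℂ))))

/-- The sets `𝒰^κ ⊆ 𝕋 × ℂ` (periodically extended to `ℝ × ℂ`). -/
def Uk (κ : ℝ) : Set (ℝ × ℂ) :=
  {a | |a.2.im| < κ * (tAbs a.1 + |a.2.re|) ∧ |a.2.im| < π/2}

/-- The set `𝒰 = {a : cosh a2 - cos a1 ≠ 0}`. -/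
def Uset : Set (ℝ × ℂ) := {a | Complex.cosh a.2 - Complex.cos (a.1:ℂ) ≠ 0}

/-- Conclusion of the good-set lemma (Lemma 6.5): for all `η` in the `R`-ball of `B_r`,
`ΔX_t^η` takes values in `closure 𝒰^{3/8}` and `t|y2-z2| ≤ C0 |ΔX_t^η|_*`. -/
def GoodSetProp (γ : ℂ → ℂ) (α R C0 T r0 : ℝ) : Prop :=
  ∀ r ∈ Ioo (0:ℝ) r0, ∀ η, MemB r η → Bnorm r η < R →
    ∀ t ∈ Ico (0:ℝ) T, ∀ y ∈ Om r, ∀ z ∈ Om0,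
      ((z.1, DX2 γ α η t y.1 y.2 z) ∈ closure (Uk (3/8))) ∧
      t * |y.2 - z.2| ≤ C0 * starNorm z.1 (DX2 γ α η t y.1 y.2 z)

/-- The time interval `I_ρ` of the existence proposition. -/
def Iset (C0 abar T r0 r α : ℝ) : Set ℝ :=
  {t | 0 ≤ t ∧ t < T ∧ C0 * (t ^ (1-α) : ℝ) * |Real.log t| < abar * (r0 - r)}

/-- `t ↦ η_t` is a solution of the fixed point problem with the properties of
Proposition 6.13. -/
def FPSol (γ : ℂ → ℂ) (α r0 C0 abar T : ℝ) (η : ℝ → ℂ → ℝ → ℂ) : Prop :=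
  (∀ y1 y2, η 0 y1 y2 = 0) ∧
  ∀ r ∈ Ioo (0:ℝ) r0,
    (∀ t ∈ Iset C0 abar T r0 r α, MemB r (η t) ∧ Bnorm r (η t) < 1) ∧
    (∀ t ∈ Iset C0 abar T r0 r α, ∀ ε > 0, ∃ δ > 0, ∀ s ∈ Iset C0 abar T r0 r α,
        |s - t| < δ → Bnorm r (fun z y2 => η s z y2 - η t z y2) < ε) ∧
    (∀ t ∈ Iset C0 abar T r0 r α, 0 < t → ∀ y ∈ Om r,
        η t y.1 y.2 = ((t ^ (-(1+α)) : ℝ) : ℂ) * ∫ s in (0:ℝ)..t, Fmap γ α (η s) s y.1 y.2)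

/-- Test functions on `[0,T) × 𝕋 × ℝ`. -/
structure TestFn (T : ℝ) (φ : ℝ → ℝ → ℝ → ℝ) : Prop where
  smooth : ContDiff ℝ (⊤ : ℕ∞) (fun p : ℝ × ℝ × ℝ => φ p.1 p.2.1 p.2.2)
  periodic : ∀ t x1 x2, φ t (x1 + 2*π) x2 = φ t x1 x2
  support : ∃ T' < T, ∃ R : ℝ, ∀ t x1 x2, (T' ≤ t ∨ R ≤ |x2|) → φ t x1 x2 = 0

/-- `∂_t φ`. -/
def pT (φ : ℝ → ℝ → ℝ → ℝ) (t x1 x2 : ℝ) : ℝ := deriv (fun s => φ s x1 x2) t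
/-- `∂_{x1} φ`. -/
def p1 (φ : ℝ → ℝ → ℝ → ℝ) (t x1 x2 : ℝ) : ℝ := deriv (fun u => φ t u x2) x1
/-- `∂_{x2} φ`. -/
def p2 (φ : ℝ → ℝ → ℝ → ℝ) (t x1 x2 : ℝ) : ℝ := deriv (fun v => φ t x1 v) x2

lemma rep_mem (x : ℝ) : -π ≤ x - 2*π*⌊(x+π)/(2*π)⌋ ∧ x - 2*π*⌊(x+π)/(2*π)⌋ < π := by
  have h1 := Int.floor_le ((x+π)/(2*π))
  have h2 := Int.lt_floor_add_one ((x+π)/(2*π))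
  have hπ := Real.pi_pos
  have e : 2*π*((x+π)/(2*π)) = x+π := by field_simp
  constructor
  · nlinarith [(mul_le_mul_of_nonneg_left h1 (by positivity : (0:ℝ) ≤ 2*π))]
  · nlinarith [(mul_lt_mul_of_pos_left h2 (by positivity : (0:ℝ) < 2*π))]

lemma tAbs_eq (x : ℝ) : tAbs x = |x - 2*π*⌊(x+π)/(2*π)⌋| := rfl

lemma cos_rep (x : ℝ) : Real.cos (x - 2*π*⌊(x+π)/(2*π)⌋) = Real.cos x := by
  have := Real.cos_add_int_mul_two_pi (x - 2*π*⌊(x+π)/(2*π)⌋) ⌊(x+π)/(2*π)⌋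
  rw [← this]; ring_nf

lemma sin_rep (x : ℝ) : Real.sin (x - 2*π*⌊(x+π)/(2*π)⌋) = Real.sin x := by
  have := Real.sin_add_int_mul_two_pi (x - 2*π*⌊(x+π)/(2*π)⌋) ⌊(x+π)/(2*π)⌋
  rw [← this]; ring_nf

lemma ccos_rep (x : ℝ) : Complex.cos ((x:ℂ) - 2*π*⌊(x+π)/(2*π)⌋) = Complex.cos x := by
  have := Complex.cos_add_int_mul_two_pi ((x:ℂ) - 2*π*⌊(x+π)/(2*π)⌋) ⌊(x+π)/(2*π)⌋
  rw [← this]; ring_nf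

lemma tAbs_eq_arccos (x : ℝ) : tAbs x = Real.arccos (Real.cos x) := by
  obtain ⟨h1, h2⟩ := rep_mem x
  rw [← cos_rep x, tAbs_eq]
  have hπ := Real.pi_pos
  rcases le_or_gt 0 (x - 2*π*⌊(x+π)/(2*π)⌋) with h | h
  · rw [Real.arccos_cos h h2.le, abs_of_nonneg h]
  · rw [← Real.cos_neg, Real.arccos_cos (by linarith) (by linarith), abs_of_neg h]

lemma continuous_tAbs : Continuous tAbs := by
  have : tAbs = fun x => Real.arccos (Real.cos x) := funext tAbs_eq_arccos
  rw [this]; exact Real.continuous_arccos.comp Real.continuous_cos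

lemma tAbs_le_pi (x : ℝ) : tAbs x ≤ π := by
  obtain ⟨h1, h2⟩ := rep_mem x
  rw [tAbs_eq, abs_le]; constructor <;> linarith

lemma tAbs_nonneg (x : ℝ) : 0 ≤ tAbs x := abs_nonneg _



lemma sin_sq_ge_aux {u : ℝ} (h0 : 0 ≤ u) (h : u ≤ 3*π/4) : u^2/50 ≤ Real.sin u ^2 := by
  have hπ := Real.pi_pos
  have hπ4 := Real.pi_le_four
  rcases le_or_gt u (π/2) with h1 | h1
  · have hj := Real.mul_le_sin h0 h1
    have hs : 0 ≤ Real.sin u := Real.sin_nonneg_of_nonneg_of_le_pi h0 (by linarith)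
    have h4 : u/2 ≤ 2/π * u := by
      have : (1:ℝ)/2 ≤ 2/π := by
        rw [div_le_div_iff₀ (by norm_num) hπ]; linarith
      nlinarith
    nlinarith
  · have e : Real.sin u = Real.cos (u - π/2) := by
      rw [show u - π/2 = -(π/2 - u) by ring, Real.cos_neg, Real.cos_pi_div_two_sub]
    have hmono : Real.cos (π/4) ≤ Real.cos (u - π/2) := by
      apply Real.cos_le_cos_of_nonneg_of_le_pi (by linarith) (by linarith) (by linarith)
    rw [Real.cos_pi_div_four] at hmono
    have h2 : Real.sin u ≥ Real.sqrt 2 / 2 := by rw [e]; exact hmono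
    have h3 : (Real.sqrt 2)^2 = 2 := Real.sq_sqrt (by norm_num)
    nlinarith [Real.sqrt_nonneg 2]

lemma sin_sq_ge {u : ℝ} (h : |u| ≤ 3*π/4) : u^2/50 ≤ Real.sin u ^2 := by
  have H := sin_sq_ge_aux (abs_nonneg u) h
  rcases le_or_gt 0 u with h0 | h0
  · rwa [abs_of_nonneg h0] at H
  · rw [abs_of_neg h0, Real.sin_neg] at H
    calc u^2/50 = (-u)^2/50 := by ring
    _ ≤ (-Real.sin u)^2 := H
    _ = Real.sin u ^2 := by ring

lemma abs_sinh_sq (u v : ℝ) :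
    ‖Complex.sinh ((u:ℂ) + (v:ℂ)*Complex.I)‖^2 = Real.sinh u ^2 + Real.sin v ^2 := by
  have e : Complex.sinh ((u:ℂ) + (v:ℂ)*Complex.I)
      = ((Real.sinh u * Real.cos v : ℝ):ℂ) + ((Real.cosh u * Real.sin v : ℝ):ℂ)*Complex.I := by
    rw [Complex.sinh_add, Complex.sinh_mul_I, Complex.cosh_mul_I]
    push_cast; ring
  rw [e, Complex.sq_norm, Complex.normSq_apply]
  simp only [Complex.add_re, Complex.add_im, Complex.mul_re, Complex.mul_im,
    Complex.ofReal_re, Complex.ofReal_im, Complex.I_re, Complex.I_im]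
  ring_nf
  nlinarith [Real.sin_sq_add_cos_sq v, Real.cosh_sq u]

lemma cosh_sub_cosh' (A B : ℂ) :
    Complex.cosh A - Complex.cosh B = 2 * Complex.sinh ((A+B)/2) * Complex.sinh ((A-B)/2) := by
  have h1 := Complex.cosh_add ((A+B)/2) ((A-B)/2)
  have h2 := Complex.cosh_sub ((A+B)/2) ((A-B)/2)
  have e1 : (A+B)/2 + (A-B)/2 = A := by ring
  have e2 : (A+B)/2 - (A-B)/2 = B := by ring
  rw [e1] at h1; rw [e2] at h2
  rw [h1, h2]; ring

lemma denom_factor (r x y : ℝ) :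
    ‖Complex.cosh ((x:ℂ) + (y:ℂ)*Complex.I) - Complex.cos (r:ℂ)‖^2
      = 4 * (Real.sinh (x/2)^2 + Real.sin ((y+r)/2)^2)
          * (Real.sinh (x/2)^2 + Real.sin ((y-r)/2)^2) := by
  have hc : Complex.cos (r:ℂ) = Complex.cosh ((r:ℂ)*Complex.I) := (Complex.cosh_mul_I ((r:ℂ))).symm
  rw [hc, cosh_sub_cosh']
  have e1 : ((x:ℂ) + (y:ℂ)*Complex.I + (r:ℂ)*Complex.I)/2
      = ((x/2 : ℝ):ℂ) + (((y+r)/2 : ℝ):ℂ)*Complex.I := by push_cast; ring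
  have e2 : ((x:ℂ) + (y:ℂ)*Complex.I - (r:ℂ)*Complex.I)/2
      = ((x/2 : ℝ):ℂ) + (((y-r)/2 : ℝ):ℂ)*Complex.I := by push_cast; ring
  rw [e1, e2, norm_mul, norm_mul, mul_pow, mul_pow, abs_sinh_sq, abs_sinh_sq, Complex.norm_two]
  ring



def lam (κ : ℝ) : ℝ := 2*κ/(1-2*κ)
def c6 (κ : ℝ) : ℝ := min (1/6) (2/(3*(1+(lam κ)^2)))
def cK (κ : ℝ) : ℝ := c6 κ/100

lemma c6_pos {κ : ℝ} (hκ0 : 0 < κ) (hκ : κ < 1/2) : 0 < c6 κ := by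
  apply lt_min (by norm_num)
  positivity

lemma c6_le {κ : ℝ} : c6 κ ≤ 1/6 := min_le_left _ _

lemma cK_pos {κ : ℝ} (hκ0 : 0 < κ) (hκ : κ < 1/2) : 0 < cK κ := by
  have := c6_pos hκ0 hκ; unfold cK; linarith

lemma cK_le {κ : ℝ} : cK κ ≤ 1/600 := by
  have := @c6_le κ; unfold cK; linarith

lemma quad_lower {κ : ℝ} (hκ0 : 0 < κ) (hκ : κ < 1/2) (r x y : ℝ)
    (hy : |y| ≤ κ*(|r|+|x|)) :
    c6 κ * (r^2+x^2+y^2) ≤ x^2+(y+r)^2 := by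
  have habs : y*r ≥ -(|y| * |r|) := by
    rw [← abs_mul]; exact neg_abs_le _
  have hyr : (y+r)^2 ≥ (|r|-|y|)^2 := by
    have h1 : |y| * |r| ≥ 0 := by positivity
    nlinarith [sq_abs y, sq_abs r]
  have hy2 : y^2 ≤ (1/2)*(r^2+x^2) := by
    have h1 : |y|^2 ≤ κ^2*(|r|+|x|)^2 := by
      have := abs_nonneg y
      nlinarith
    have h2 : κ^2 ≤ 1/4 := by nlinarith
    nlinarith [sq_abs y, sq_abs r, sq_abs x, sq_nonneg (|r|-|x|), sq_nonneg (|r|+|x|)]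
  rcases le_or_gt (2*|y|) |r| with hc | hc
  · -- |y| ≤ |r|/2
    have h1 : (|r|-|y|)^2 ≥ r^2/4 := by
      nlinarith [sq_abs r, abs_nonneg y, abs_nonneg r]
    have h2 : c6 κ ≤ 1/6 := c6_le
    have h3 : 0 < c6 κ := c6_pos hκ0 hκ
    nlinarith
  · -- |r| < 2|y|
    set L := lam κ with hL
    have h12 : 0 < 1 - 2*κ := by linarith
    have hrx : |r| ≤ L * |x| := by
      rw [hL, lam, div_mul_eq_mul_div, le_div_iff₀ h12]
      nlinarith [abs_nonneg x, abs_nonneg r, abs_nonneg y]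
    have hr2 : r^2 ≤ L^2 * x^2 := by
      have := mul_self_le_mul_self (abs_nonneg r) hrx
      nlinarith [sq_abs r, sq_abs x, abs_nonneg x, abs_nonneg r]
    have hT : (0:ℝ) < 1 + L^2 := by positivity
    have hc6 : c6 κ * (3*(1+L^2)) ≤ 2 := by
      have h1 : c6 κ ≤ 2/(3*(1+L^2)) := min_le_right _ _
      have h2 : 0 ≤ 3*(1+L^2) := by positivity
      calc c6 κ * (3*(1+L^2)) ≤ 2/(3*(1+L^2)) * (3*(1+L^2)) :=
            mul_le_mul_of_nonneg_right h1 h2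
        _ = 2 := by field_simp
    have h3 : 0 < c6 κ := c6_pos hκ0 hκ
    nlinarith [sq_nonneg (y+r), mul_nonneg h3.le (sq_nonneg x), mul_le_mul_of_nonneg_left hr2 h3.le]



lemma sinh_sq_ge (t : ℝ) : t^2 ≤ Real.sinh t ^2 := by
  have h1 : |t| ≤ Real.sinh |t| := Real.self_le_sinh_iff.2 (abs_nonneg t)
  have h2 : |Real.sinh t| = Real.sinh |t| := Real.abs_sinh t
  nlinarith [sq_abs t, sq_abs (Real.sinh t), abs_nonneg t]

lemma sinh_le_exp_mul {t : ℝ} (ht : 0 ≤ t) : Real.sinh t ≤ t * Real.exp t := by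
  have h := Real.add_one_le_exp (-(2*t))
  have e1 : Real.exp (-t) * Real.exp t = 1 := by rw [← Real.exp_add]; simp
  have e2 : Real.exp (-(2*t)) = Real.exp (-t) * Real.exp (-t) := by
    rw [← Real.exp_add]; ring_nf
  rw [Real.sinh_eq]
  nlinarith [Real.exp_pos t, Real.exp_pos (-t)]

lemma cosh_le_exp (t : ℝ) : Real.cosh t ≤ Real.exp |t| := by
  rw [Real.cosh_eq]
  rcases le_or_gt 0 t with h | h
  · rw [abs_of_nonneg h]
    nlinarith [Real.exp_pos (-t), Real.exp_le_exp.2 (by linarith : -t ≤ t)]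
  · rw [abs_of_neg h]
    nlinarith [Real.exp_pos t, Real.exp_le_exp.2 (by linarith : t ≤ -t)]

lemma exp_abs_le_two_cosh (t : ℝ) : Real.exp |t| ≤ 2 * Real.cosh t := by
  rw [Real.cosh_eq]
  rcases le_or_gt 0 t with h | h
  · rw [abs_of_nonneg h]; nlinarith [Real.exp_pos (-t)]
  · rw [abs_of_neg h]; nlinarith [Real.exp_pos t]

lemma cosh_sub_one (t : ℝ) : Real.cosh t - 1 = 2 * Real.sinh (t/2) ^2 := by
  have h1 : Real.cosh (2*(t/2)) = Real.cosh (t/2)^2 + Real.sinh (t/2)^2 := Real.cosh_two_mul (t/2)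
  have h2 : Real.sinh (t/2)^2 = Real.cosh (t/2)^2 - 1 := Real.sinh_sq (t/2)
  have : (2:ℝ)*(t/2) = t := by ring
  rw [this] at h1
  linarith

lemma abs_cosh_sq (u v : ℝ) :
    ‖Complex.cosh ((u:ℂ) + (v:ℂ)*Complex.I)‖^2 = Real.sinh u ^2 + Real.cos v ^2 := by
  have e : Complex.cosh ((u:ℂ) + (v:ℂ)*Complex.I)
      = ((Real.cosh u * Real.cos v : ℝ):ℂ) + ((Real.sinh u * Real.sin v : ℝ):ℂ)*Complex.I := by
    rw [Complex.cosh_add, Complex.sinh_mul_I, Complex.cosh_mul_I]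
    push_cast; ring
  rw [e, Complex.sq_norm, Complex.normSq_apply]
  simp only [Complex.add_re, Complex.add_im, Complex.mul_re, Complex.mul_im,
    Complex.ofReal_re, Complex.ofReal_im, Complex.I_re, Complex.I_im]
  ring_nf
  nlinarith [Real.sin_sq_add_cos_sq v, Real.cosh_sq u]

-- exp of a nonneg number ≥ (t/6)^6
lemma exp_ge_pow6 {t : ℝ} (ht : 0 ≤ t) : (t/6)^6 ≤ Real.exp t := by
  have h1 : t/6 ≤ Real.exp (t/6) := by
    have := Real.add_one_le_exp (t/6); linarith
  have h2 : (t/6)^6 ≤ Real.exp (t/6)^6 := by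
    apply pow_le_pow_left₀ (by positivity) h1
  have h3 : Real.exp (t/6)^6 = Real.exp t := by
    rw [← Real.exp_nat_mul]; norm_num; ring_nf
  linarith


set_option maxHeartbeats 1000000 in
lemma denom_lower {κ : ℝ} (hκ0 : 0 < κ) (hκ : κ < 1/2) (a1 : ℝ) (a2 : ℂ)
    (h1 : |a2.im| ≤ κ*(tAbs a1 + |a2.re|)) (h2 : |a2.im| ≤ π/2) :
    cK κ * (tAbs a1^2 + a2.re^2 + a2.im^2)
        ≤ ‖Complex.cosh a2 - Complex.cos (a1:ℂ)‖ ∧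
    Real.cosh a2.re - 1 ≤ ‖Complex.cosh a2 - Complex.cos (a1:ℂ)‖ := by
  have hπ := Real.pi_pos
  set x := a2.re with hx
  set y := a2.im with hy
  set r := a1 - 2*π*⌊(a1+π)/(2*π)⌋ with hr
  have hrabs : tAbs a1 = |r| := rfl
  obtain ⟨hr1, hr2⟩ := rep_mem a1
  rw [← hr] at hr1 hr2
  have hrpi : |r| ≤ π := abs_le.2 ⟨hr1, hr2.le⟩
  have hD : Complex.cosh a2 - Complex.cos (a1:ℂ)
      = Complex.cosh ((x:ℂ) + (y:ℂ)*Complex.I) - Complex.cos (r:ℂ) := by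
    have e1 : (x:ℂ) + (y:ℂ)*Complex.I = a2 := Complex.re_add_im a2
    have e2 : Complex.cos ((r:ℂ)) = Complex.cos (a1:ℂ) := by
      have e3 : (r:ℂ) = (a1:ℂ) - 2*(π:ℂ)*(⌊(a1+π)/(2*π)⌋ : ℤ) := by
        rw [hr]; push_cast; ring
      rw [e3]
      have e4 := Complex.cos_add_int_mul_two_pi
        ((a1:ℂ) - 2*(π:ℂ)*(⌊(a1+π)/(2*π)⌋ : ℤ)) ⌊(a1+π)/(2*π)⌋
      rw [← e4]; ring_nf
    rw [e1, e2]
  rw [hD]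
  set D := ‖Complex.cosh ((x:ℂ) + (y:ℂ)*Complex.I) - Complex.cos (r:ℂ)‖ with hDdef
  have hDnn : 0 ≤ D := norm_nonneg _
  have key := denom_factor r x y
  rw [← hDdef] at key
  set N := tAbs a1^2 + x^2 + y^2 with hN
  have hNr : N = r^2 + x^2 + y^2 := by rw [hN, hrabs, sq_abs]
  clear_value x y r N D
  clear hD hDdef hN hr
  have hNnn : 0 ≤ N := by rw [hNr]; positivity
  -- sin lower bounds
  have hsp : ((y+r)/2)^2/50 ≤ Real.sin ((y+r)/2)^2 := by
    apply sin_sq_ge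
    calc |(y+r)/2| = |y+r|/2 := by rw [abs_div]; norm_num
      _ ≤ (|y| + |r|)/2 := by linarith [abs_add_le y r]
      _ ≤ 3*π/4 := by linarith
  have hsm : ((y-r)/2)^2/50 ≤ Real.sin ((y-r)/2)^2 := by
    apply sin_sq_ge
    calc |(y-r)/2| = |y-r|/2 := by rw [abs_div]; norm_num
      _ ≤ (|y| + |r|)/2 := by linarith [abs_sub y r]
      _ ≤ 3*π/4 := by linarith
  -- quadratic lower bounds
  have hyk : |y| ≤ κ*(|r| + |x|) := by rwa [hrabs] at h1
  have hqp : c6 κ * (r^2+x^2+y^2) ≤ x^2+(y+r)^2 := quad_lower hκ0 hκ r x y hyk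
  have hqm : c6 κ * (r^2+x^2+y^2) ≤ x^2+(y-r)^2 := by
    have := quad_lower hκ0 hκ (-r) x y (by rwa [abs_neg])
    have e : y + -r = y - r := by ring
    rw [neg_pow, e] at this
    simpa using this
  -- factor lower bounds
  have hsh := sinh_sq_ge (x/2)
  have hep : ((y+r)/2)^2/50 = (y+r)^2/200 := by ring
  have hem : ((y-r)/2)^2/50 = (y-r)^2/200 := by ring
  have hex : (x/2)^2 = x^2/4 := by ring
  have hFp : c6 κ/200 * N ≤ Real.sinh (x/2)^2 + Real.sin ((y+r)/2)^2 := by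
    rw [hNr]; rw [hep] at hsp; rw [hex] at hsh; linarith [sq_nonneg x]
  have hFm : c6 κ/200 * N ≤ Real.sinh (x/2)^2 + Real.sin ((y-r)/2)^2 := by
    rw [hNr]; rw [hem] at hsm; rw [hex] at hsh; linarith [sq_nonneg x]
  have hc6 := c6_pos hκ0 hκ
  have hcKN : 0 ≤ cK κ * N := mul_nonneg (cK_pos hκ0 hκ).le hNnn
  constructor
  · have hsq : (cK κ * N)^2 ≤ D^2 := by
      rw [key]
      have hFpnn : 0 ≤ c6 κ/200 * N := by positivity
      have hprod := mul_le_mul hFp hFm hFpnn (hFpnn.trans hFp)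
      have hcc : cK κ = c6 κ/100 := rfl
      rw [hcc]
      nlinarith [hprod]
    have := Real.sqrt_le_sqrt hsq
    rwa [Real.sqrt_sq hcKN, Real.sqrt_sq hDnn] at this
  · have h1c : 0 ≤ Real.cosh x - 1 := by linarith [Real.one_le_cosh x]
    have hsq : (Real.cosh x - 1)^2 ≤ D^2 := by
      rw [key, cosh_sub_one]
      have hS : 0 ≤ Real.sinh (x/2)^2 := sq_nonneg _
      have hP : 0 ≤ Real.sin ((y+r)/2)^2 := sq_nonneg _
      have hQ : 0 ≤ Real.sin ((y-r)/2)^2 := sq_nonneg _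
      nlinarith [mul_nonneg hS hP, mul_nonneg hS hQ, mul_nonneg hP hQ]
    have := Real.sqrt_le_sqrt hsq
    rwa [Real.sqrt_sq h1c, Real.sqrt_sq hDnn] at this

lemma abs_sin_complex (a1 : ℝ) : ‖Complex.sin (a1:ℂ)‖ = |Real.sin a1| := by
  rw [← Complex.ofReal_sin, Complex.norm_real, Real.norm_eq_abs]

lemma abs_sin_le_one' (a1 : ℝ) : ‖Complex.sin (a1:ℂ)‖ ≤ 1 := by
  rw [abs_sin_complex]
  exact abs_le.2 ⟨Real.neg_one_le_sin a1, Real.sin_le_one a1⟩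

lemma abs_sin_le_tAbs (a1 : ℝ) : ‖Complex.sin (a1:ℂ)‖ ≤ tAbs a1 := by
  rw [abs_sin_complex, ← sin_rep a1]
  exact (Real.abs_sin_le_abs).trans_eq rfl

lemma abs_sinh_comp (a2 : ℂ) :
    ‖Complex.sinh a2‖^2 = Real.sinh a2.re ^2 + Real.sin a2.im ^2 := by
  have := abs_sinh_sq a2.re a2.im
  rwa [Complex.re_add_im] at this

lemma abs_cosh_comp (a2 : ℂ) :
    ‖Complex.cosh a2‖^2 = Real.sinh a2.re ^2 + Real.cos a2.im ^2 := by
  have := abs_cosh_sq a2.re a2.im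
  rwa [Complex.re_add_im] at this

lemma sinh_le_cosh' (t : ℝ) : Real.sinh t ≤ Real.cosh t := by
  nlinarith [Real.cosh_sub_sinh t, Real.exp_pos (-t)]

lemma K2_hasDerivAt (a1 : ℝ) {w : ℂ} (hw : Complex.cosh w - Complex.cos (a1:ℂ) ≠ 0) :
    HasDerivAt (fun z => K2 a1 z)
      (-(((1/(4*π) : ℝ) : ℂ) * Complex.sin (a1:ℂ) * Complex.sinh w)
        / (Complex.cosh w - Complex.cos (a1:ℂ))^2) w := by
  have hA := hasDerivAt_const (𝕜 := ℂ) w (((1/(4*π) : ℝ) : ℂ) * Complex.sin (a1:ℂ))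
  have hg : HasDerivAt (fun z => Complex.cosh z - Complex.cos (a1:ℂ)) (Complex.sinh w) w :=
    (Complex.hasDerivAt_cosh w).sub_const _
  have h := hA.div hg hw
  refine h.congr_deriv ?_
  ring

lemma K2'_hasDerivAt (a1 : ℝ) {w : ℂ} (hw : Complex.cosh w - Complex.cos (a1:ℂ) ≠ 0) :
    HasDerivAt (fun z => -(((1/(4*π) : ℝ) : ℂ) * Complex.sin (a1:ℂ) * Complex.sinh z)
        / (Complex.cosh z - Complex.cos (a1:ℂ))^2)
      (((1/(4*π) : ℝ) : ℂ) * Complex.sin (a1:ℂ)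
        * (2 * Complex.sinh w^2 - Complex.cosh w * (Complex.cosh w - Complex.cos (a1:ℂ)))
        / (Complex.cosh w - Complex.cos (a1:ℂ))^3) w := by
  have hu : HasDerivAt (fun z => -(((1/(4*π) : ℝ) : ℂ) * Complex.sin (a1:ℂ) * Complex.sinh z))
      (-(((1/(4*π) : ℝ) : ℂ) * Complex.sin (a1:ℂ) * Complex.cosh w)) w :=
    ((Complex.hasDerivAt_sinh w).const_mul _).neg
  have hg : HasDerivAt (fun z => Complex.cosh z - Complex.cos (a1:ℂ)) (Complex.sinh w) w :=
    (Complex.hasDerivAt_cosh w).sub_const _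
  have hv : HasDerivAt (fun z => (Complex.cosh z - Complex.cos (a1:ℂ))^2)
      ((2:ℕ) * (Complex.cosh w - Complex.cos (a1:ℂ))^1 * Complex.sinh w) w := hg.pow 2
  have h := hu.div hv (pow_ne_zero 2 hw)
  refine h.congr_deriv ?_
  rw [div_eq_div_iff (pow_ne_zero 2 (pow_ne_zero 2 hw)) (pow_ne_zero 3 hw)]
  ring

lemma ccos_rep' (a1 : ℝ) :
    Complex.cos (((a1 - 2*π*⌊(a1+π)/(2*π)⌋ : ℝ)):ℂ) = Complex.cos (a1:ℂ) := by
  have e3 : (((a1 - 2*π*⌊(a1+π)/(2*π)⌋ : ℝ)):ℂ)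
      = (a1:ℂ) - 2*(π:ℂ)*(⌊(a1+π)/(2*π)⌋ : ℤ) := by push_cast; ring
  rw [e3]
  have e4 := Complex.cos_add_int_mul_two_pi
    ((a1:ℂ) - 2*(π:ℂ)*(⌊(a1+π)/(2*π)⌋ : ℤ)) ⌊(a1+π)/(2*π)⌋
  rw [← e4]; ring_nf

lemma Npos {κ : ℝ} (hκ0 : 0 < κ) (a1 : ℝ) (a2 : ℂ)
    (h1 : |a2.im| < κ * (tAbs a1 + |a2.re|)) :
    0 < tAbs a1^2 + a2.re^2 + a2.im^2 := by
  have hpos : 0 < tAbs a1 + |a2.re| := by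
    nlinarith [abs_nonneg a2.im, tAbs_nonneg a1, abs_nonneg a2.re]
  have := mul_pos hpos hpos
  nlinarith [sq_abs a2.re, sq_nonneg a2.im, tAbs_nonneg a1, abs_nonneg a2.re]

lemma Uk_subset_Uset {κ : ℝ} (hκ0 : 0 < κ) (hκ : κ < 1/2) : Uk κ ⊆ Uset := by
  rintro ⟨a1, a2⟩ ⟨h1, h2⟩
  simp only [Uset, Set.mem_setOf_eq]
  have hb := (denom_lower hκ0 hκ a1 a2 h1.le h2.le).1
  have hN := Npos hκ0 a1 a2 h1
  intro h0
  rw [h0] at hb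
  simp only [norm_zero] at hb
  have := mul_pos (cK_pos hκ0 hκ) hN
  linarith

lemma Uk_isOpen (κ : ℝ) : IsOpen (Uk κ) := by
  have hcont1 : Continuous fun a : ℝ × ℂ => |a.2.im| :=
    (Complex.continuous_im.comp continuous_snd).abs
  have hcont2 : Continuous fun a : ℝ × ℂ => κ * (tAbs a.1 + |a.2.re|) :=
    continuous_const.mul ((continuous_tAbs.comp continuous_fst).add
      (Complex.continuous_re.comp continuous_snd).abs)
  have e : Uk κ = {a : ℝ × ℂ | |a.2.im| < κ * (tAbs a.1 + |a.2.re|)}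
      ∩ {a : ℝ × ℂ | |a.2.im| < π/2} := rfl
  rw [e]
  exact (isOpen_lt hcont1 hcont2).inter (isOpen_lt hcont1 continuous_const)

lemma Uset_isOpen : IsOpen Uset := by
  have hgcont : Continuous fun a : ℝ × ℂ => Complex.cosh a.2 - Complex.cos (a.1:ℂ) :=
    (Complex.continuous_cosh.comp continuous_snd).sub
      (Complex.continuous_cos.comp (Complex.continuous_ofReal.comp continuous_fst))
  have e : Uset = (fun a : ℝ × ℂ => Complex.cosh a.2 - Complex.cos (a.1:ℂ)) ⁻¹' {(0:ℂ)}ᶜ := rfl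
  rw [e]
  exact isOpen_compl_singleton.preimage hgcont

lemma frontier_inter {κ : ℝ} (hκ0 : 0 < κ) (hκ : κ < 1/2) :
    frontier (Uk κ) ∩ frontier Uset = {a : ℝ × ℂ | tAbs a.1 = 0 ∧ a.2 = 0} := by
  have hπ := Real.pi_pos
  ext a
  obtain ⟨a1, a2⟩ := a
  simp only [Set.mem_inter_iff, Set.mem_setOf_eq]
  constructor
  · rintro ⟨hfk, hfs⟩
    have hclK : |a2.im| ≤ κ * (tAbs a1 + |a2.re|) ∧ |a2.im| ≤ π/2 := by
      have hclosed : IsClosed {a : ℝ × ℂ | |a.2.im| ≤ κ * (tAbs a.1 + |a.2.re|) ∧ |a.2.im| ≤ π/2} := by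
        apply IsClosed.inter
        · exact isClosed_le ((Complex.continuous_im.comp continuous_snd).abs)
            (continuous_const.mul ((continuous_tAbs.comp continuous_fst).add
              (Complex.continuous_re.comp continuous_snd).abs))
        · exact isClosed_le ((Complex.continuous_im.comp continuous_snd).abs) continuous_const
      have hsub : Uk κ ⊆ {a : ℝ × ℂ | |a.2.im| ≤ κ * (tAbs a.1 + |a.2.re|) ∧ |a.2.im| ≤ π/2} := by
        rintro b ⟨hb1, hb2⟩
        exact ⟨hb1.le, hb2.le⟩
      have hcl := closure_minimal hsub hclosed
      exact hcl (frontier_subset_closure hfk)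
    have hnotS : (a1, a2) ∉ Uset := by
      rw [Uset_isOpen.frontier_eq] at hfs
      exact hfs.2
    have hD0 : Complex.cosh a2 - Complex.cos (a1:ℂ) = 0 := by
      by_contra hc
      exact hnotS hc
    have hb := (denom_lower hκ0 hκ a1 a2 hclK.1 hclK.2).1
    rw [hD0] at hb
    simp only [norm_zero] at hb
    have hcK := cK_pos hκ0 hκ
    have hN0 : tAbs a1^2 + a2.re^2 + a2.im^2 ≤ 0 := by
      by_contra hc
      push_neg at hc
      nlinarith
    have ht0 : tAbs a1 = 0 := by
      have h1 := tAbs_nonneg a1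
      nlinarith [sq_nonneg a2.re, sq_nonneg a2.im]
    refine ⟨ht0, ?_⟩
    rw [ht0] at hN0
    have hre2 : a2.re^2 = 0 := by
      have := sq_nonneg a2.re
      nlinarith [sq_nonneg a2.im]
    have him2 : a2.im^2 = 0 := by
      have := sq_nonneg a2.im
      nlinarith [sq_nonneg a2.re]
    have hre : a2.re = 0 := by
      exact pow_eq_zero_iff (two_ne_zero) |>.1 hre2
    have him : a2.im = 0 := by
      exact pow_eq_zero_iff (two_ne_zero) |>.1 him2
    apply Complex.ext <;> simp [hre, him]
  · rintro ⟨h1, h2⟩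
    -- cos a1 = 1
    have hr0 : a1 - 2*π*⌊(a1+π)/(2*π)⌋ = 0 := by
      have : |a1 - 2*π*⌊(a1+π)/(2*π)⌋| = 0 := h1
      exact abs_eq_zero.1 this
    have hcos1 : Complex.cos (a1:ℂ) = 1 := by
      rw [← ccos_rep' a1, hr0]
      simp
    -- the approximating sequence
    set u : ℕ → ℝ × ℂ := fun n => (a1, (((1/(n+1) : ℝ)):ℂ)) with hu
    have htend : Filter.Tendsto u Filter.atTop (nhds (a1, a2)) := by
      rw [h2]
      apply Filter.Tendsto.prodMk_nhds tendsto_const_nhds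
      have h0 : Filter.Tendsto (fun n : ℕ => (1/(n+1) : ℝ)) Filter.atTop (nhds 0) :=
        tendsto_one_div_add_atTop_nhds_zero_nat
      have := (Complex.continuous_ofReal.tendsto 0).comp h0
      simpa [Function.comp_def] using this
    have hmemK : ∀ n, u n ∈ Uk κ := by
      intro n
      have hp : (0:ℝ) < 1/(n+1) := by positivity
      constructor
      · simp only [hu, Complex.ofReal_im, Complex.ofReal_re, abs_zero, h1]
        rw [abs_of_pos hp]
        positivity
      · simp only [hu, Complex.ofReal_im, abs_zero]
        positivity
    have hmemS : ∀ n, u n ∈ Uset := by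
      intro n
      have hp : (0:ℝ) < 1/(n+1) := by positivity
      show Complex.cosh _ - Complex.cos _ ≠ 0
      simp only [hu]
      rw [hcos1, ← Complex.ofReal_cosh]
      intro hcontra
      have : Real.cosh (1/(n+1)) = 1 := by
        have := sub_eq_zero.1 hcontra
        exact_mod_cast this
      have := (Real.one_lt_cosh (x := 1/(n+1))).2 (ne_of_gt hp)
      linarith
    constructor
    · rw [(Uk_isOpen κ).frontier_eq]
      refine ⟨mem_closure_of_tendsto htend (Filter.Eventually.of_forall hmemK), ?_⟩
      rintro ⟨hh1, -⟩
      rw [h1, h2] at hh1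
      simp at hh1
    · rw [Uset_isOpen.frontier_eq]
      refine ⟨mem_closure_of_tendsto htend (Filter.Eventually.of_forall hmemS), ?_⟩
      intro hh
      apply hh
      rw [h2, hcos1]
      simp

lemma le_on_sq {a b : ℝ} (ha : 0 ≤ a) (hb : 0 ≤ b) (h : a^2 ≤ b^2) : a ≤ b := by
  have := Real.sqrt_le_sqrt h
  rwa [Real.sqrt_sq ha, Real.sqrt_sq hb] at this

lemma dchain {n1 n2 d1 d2 : ℝ} (hn1 : 0 ≤ n1) (hn : n1 ≤ n2) (hd2 : 0 < d2) (hd : d2 ≤ d1) :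
    n1/d1 ≤ n2/d2 :=
  div_le_div₀ (hn1.trans hn) hn hd2 hd

set_option maxHeartbeats 1000000 in
lemma main_bound {κ : ℝ} (hκ0 : 0 < κ) (hκ : κ < 1/2) (a1 : ℝ) (a2 : ℂ)
    (h1 : |a2.im| < κ * (tAbs a1 + |a2.re|)) (h2 : |a2.im| < π/2) :
    ∀ j ∈ ({0, 1, 2} : Set ℕ),
      ‖iteratedDeriv j (fun w => K2 a1 w) a2‖
        ≤ ((4*Real.exp 40 + 10^8) * ((1/cK κ)^3 + 1)) / (starNorm a1 a2) ^ (1 + j) := by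
  have hπ := Real.pi_pos
  have hπ4 := Real.pi_le_four
  set C := ((4*Real.exp 40 + 10^8) * ((1/cK κ)^3 + 1)) with hC
  set t := 1/cK κ with htdef
  have hc0 := cK_pos hκ0 hκ
  have hcle : cK κ ≤ 1/600 := cK_le
  have ht1 : 1 ≤ t := by
    rw [htdef, le_div_iff₀ hc0]; linarith only [hcle, hc0]
  have ht0 : 0 < t := by linarith only [ht1]
  have hE1 : 1 ≤ Real.exp 40 := by
    calc (1:ℝ) = Real.exp 0 := Real.exp_zero.symm
      _ ≤ Real.exp 40 := Real.exp_le_exp.2 (by norm_num)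
  have hEe : Real.exp 20 ≤ Real.exp 40 := Real.exp_le_exp.2 (by norm_num)
  have hE20pos := Real.exp_pos (20:ℝ)
  have hE20one : 1 ≤ Real.exp 20 := Real.one_le_exp (by norm_num)
  have hexp2040 : Real.exp 20 * Real.exp 20 = Real.exp 40 := by
    rw [← Real.exp_add]; norm_num
  have hC0 : 0 < C := by positivity
  -- constant comparisons
  have ht23 : t^2 ≤ t^3 := by
    calc t^2 = t^2*1 := (mul_one _).symm
      _ ≤ t^2*t := mul_le_mul_of_nonneg_left ht1 (sq_nonneg t)
      _ = t^3 := by ring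
  have ht3 : t ≤ t^3 := by
    have h1' : t ≤ t^2 := by
      calc t = t*1 := (mul_one _).symm
        _ ≤ t*t := mul_le_mul_of_nonneg_left ht1 ht0.le
        _ = t^2 := by ring
    exact h1'.trans ht23
  have h1t3 : 1 ≤ t^3 := by
    calc (1:ℝ) = 1^3 := by norm_num
      _ ≤ t^3 := pow_le_pow_left₀ (by norm_num) ht1 3
  have hF1 : (1:ℝ) ≤ 4*Real.exp 40 + 10^8 := by linarith only [hE1]
  have hcmp3 : 4*Real.exp 40 * t^3 ≤ C := by
    rw [hC]
    calc 4*Real.exp 40 * t^3 ≤ (4*Real.exp 40 + 10^8) * t^3 :=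
          mul_le_mul_of_nonneg_right (by linarith only []) (by positivity)
      _ ≤ (4*Real.exp 40 + 10^8) * (t^3+1) :=
          mul_le_mul_of_nonneg_left (by linarith only []) (by linarith only [hF1])
  have hcmp1 : t ≤ C := by
    refine (ht3.trans ?_)
    calc t^3 = 1 * t^3 := (one_mul _).symm
      _ ≤ 4*Real.exp 40 * t^3 := mul_le_mul_of_nonneg_right (by linarith only [hE1]) (by positivity)
      _ ≤ C := hcmp3
  have hstep24 : Real.exp 20 * t^2 ≤ Real.exp 40 * t^3 :=
    mul_le_mul hEe ht23 (sq_nonneg t) (by positivity)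
  have hcmp2 : Real.exp 20 * t^2 ≤ C := by
    refine hstep24.trans (le_trans ?_ hcmp3)
    have : (0:ℝ) ≤ Real.exp 40 * t^3 := by positivity
    linarith only [this]
  have hcmp4 : 4*Real.exp 20 * t^2 ≤ C := by
    have : 4*Real.exp 20 * t^2 ≤ 4*Real.exp 40 * t^3 := by linarith only [hstep24]
    exact this.trans hcmp3
  have hcmp5 : (2*10^8 : ℝ) ≤ C := by
    rw [hC]
    calc (2*10^8:ℝ) = 10^8 * 2 := by norm_num
      _ ≤ 10^8 * (t^3+1) := mul_le_mul_of_nonneg_left (by linarith only [h1t3]) (by norm_num)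
      _ ≤ (4*Real.exp 40 + 10^8) * (t^3+1) :=
          mul_le_mul_of_nonneg_right (by linarith only [Real.exp_pos (40:ℝ)])
            (by linarith only [h1t3])
  have h4π : 1/(4*π) ≤ 1 := by
    rw [div_le_one (by positivity)]; linarith only [Real.pi_gt_three]
  have hA4 : (0:ℝ) < 1/(4*π) := by positivity
  -- geometric setup
  set m := starNorm a1 a2 with hmdef
  have habs2 : ‖a2‖^2 = a2.re^2 + a2.im^2 := by
    rw [Complex.sq_norm, Complex.normSq_apply]; ring
  have hN := Npos hκ0 a1 a2 h1
  have hm0 : 0 < m := by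
    rw [hmdef]; unfold starNorm
    apply Real.sqrt_pos.2
    rw [habs2]; linarith only [hN]
  have hm2 : m^2 = tAbs a1^2 + a2.re^2 + a2.im^2 := by
    rw [hmdef]; unfold starNorm
    rw [Real.sq_sqrt (by positivity), habs2]; ring
  obtain ⟨hD1', hD2⟩ := denom_lower hκ0 hκ a1 a2 h1.le h2.le
  set D := ‖Complex.cosh a2 - Complex.cos (a1:ℂ)‖ with hDdef
  have hD1 : cK κ * m^2 ≤ D := by rw [hm2]; exact hD1'
  have hD0 : 0 < D := lt_of_lt_of_le (by positivity) hD1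
  have hne : Complex.cosh a2 - Complex.cos (a1:ℂ) ≠ 0 := by
    intro h0
    rw [hDdef, h0] at hD0
    simp at hD0
  -- numerator quantities
  set Sn := ‖Complex.sin (a1:ℂ)‖ with hSndef
  set Sh := ‖Complex.sinh a2‖ with hShdef
  set Ch := ‖Complex.cosh a2‖ with hChdef
  have hSn0 : 0 ≤ Sn := norm_nonneg _
  have hSh0 : 0 ≤ Sh := norm_nonneg _
  have hCh0 : 0 ≤ Ch := norm_nonneg _
  have hSn1 : Sn ≤ 1 := abs_sin_le_one' a1
  have htm : tAbs a1 ≤ m := by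
    apply le_on_sq (tAbs_nonneg a1) hm0.le
    rw [hm2]; linarith only [sq_nonneg a2.re, sq_nonneg a2.im]
  have hSnm : Sn ≤ m := (abs_sin_le_tAbs a1).trans htm
  -- derivative values
  have hev : ∀ᶠ w in nhds a2, Complex.cosh w - Complex.cos (a1:ℂ) ≠ 0 := by
    have hSopen : IsOpen {w : ℂ | Complex.cosh w - Complex.cos (a1:ℂ) ≠ 0} := by
      have e : {w : ℂ | Complex.cosh w - Complex.cos (a1:ℂ) ≠ 0}
          = (fun w => Complex.cosh w - Complex.cos (a1:ℂ)) ⁻¹' {(0:ℂ)}ᶜ := rfl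
      rw [e]
      exact isOpen_compl_singleton.preimage (Complex.continuous_cosh.sub continuous_const)
    exact Filter.eventually_of_mem (hSopen.mem_nhds hne) (fun w hw => hw)
  have absA : ‖((1/(4*π) : ℝ) : ℂ) * Complex.sin (a1:ℂ)‖ = (1/(4*π)) * Sn := by
    rw [norm_mul, Complex.norm_real, Real.norm_eq_abs, abs_of_pos hA4]
  have d0 : ‖iteratedDeriv 0 (fun w => K2 a1 w) a2‖ = (1/(4*π)) * Sn / D := by
    rw [iteratedDeriv_zero]
    show ‖K2 a1 a2‖ = _
    unfold K2
    rw [norm_div, absA]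
  have d1 : ‖iteratedDeriv 1 (fun w => K2 a1 w) a2‖ = (1/(4*π)) * Sn * Sh / D^2 := by
    rw [iteratedDeriv_one, (K2_hasDerivAt a1 hne).deriv]
    rw [norm_div, norm_neg, norm_mul, absA, norm_pow]
  have d2 : ‖iteratedDeriv 2 (fun w => K2 a1 w) a2‖
      ≤ (1/(4*π)) * Sn * (2*Sh^2 + Ch*D) / D^3 := by
    have e21 : iteratedDeriv 2 (fun w => K2 a1 w) = deriv (deriv (fun w => K2 a1 w)) := by
      rw [show (2:ℕ) = 1+1 from rfl, iteratedDeriv_succ, iteratedDeriv_one]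
    have heq : deriv (fun w => K2 a1 w)
        =ᶠ[nhds a2] (fun w => -(((1/(4*π) : ℝ) : ℂ) * Complex.sin (a1:ℂ) * Complex.sinh w)
          / (Complex.cosh w - Complex.cos (a1:ℂ))^2) :=
      hev.mono fun w hw => (K2_hasDerivAt a1 hw).deriv
    rw [e21, heq.deriv_eq, (K2'_hasDerivAt a1 hne).deriv]
    rw [norm_div, norm_mul, absA, norm_pow]
    apply (div_le_div_iff_of_pos_right (by positivity : (0:ℝ) < D^3)).2
    apply mul_le_mul_of_nonneg_left ?_ (mul_nonneg hA4.le hSn0)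
    calc ‖2*Complex.sinh a2^2
          - Complex.cosh a2*(Complex.cosh a2 - Complex.cos (a1:ℂ))‖
        ≤ ‖2*Complex.sinh a2^2‖
          + ‖Complex.cosh a2*(Complex.cosh a2 - Complex.cos (a1:ℂ))‖ :=
          norm_sub_le _ _
      _ = 2*Sh^2 + Ch*D := by
          rw [norm_mul, norm_mul, norm_pow, Complex.norm_two, hShdef, hChdef, hDdef]
  -- the three bounds
  have key : (1/(4*π)) * Sn / D ≤ C / m^1
      ∧ (1/(4*π)) * Sn * Sh / D^2 ≤ C / m^2
      ∧ (1/(4*π)) * Sn * (2*Sh^2 + Ch*D) / D^3 ≤ C / m^3 := by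
    have hpSn : (1/(4*π)) * Sn ≤ Sn := by
      calc (1/(4*π)) * Sn ≤ 1 * Sn := mul_le_mul_of_nonneg_right h4π hSn0
        _ = Sn := one_mul _
    rcases le_or_gt m 20 with hm20 | hm20
    · -- small/medium regime
      have hxm : |a2.re| ≤ m := by
        apply le_on_sq (abs_nonneg _) hm0.le
        rw [sq_abs, hm2]
        linarith only [sq_nonneg (tAbs a1), sq_nonneg a2.im]
      have hx20 : |a2.re| ≤ 20 := hxm.trans hm20
      have hsinhnn : 0 ≤ Real.sinh |a2.re| := (abs_nonneg _).trans (Real.self_le_sinh_iff.2 (abs_nonneg _))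
      have hb1 : Real.sinh |a2.re| ≤ |a2.re| * Real.exp |a2.re| := sinh_le_exp_mul (abs_nonneg _)
      have hb2 : Real.exp |a2.re| ≤ Real.exp 20 := Real.exp_le_exp.2 hx20
      have hb3 : Real.sinh |a2.re| ≤ |a2.re| * Real.exp 20 :=
        hb1.trans (mul_le_mul_of_nonneg_left hb2 (abs_nonneg _))
      have hb4 : Real.sinh a2.re^2 = Real.sinh |a2.re|^2 := by
        rw [← sq_abs (Real.sinh a2.re), Real.abs_sinh]
      have hsinhx : Real.sinh a2.re^2 ≤ Real.exp 40 * a2.re^2 := by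
        have hb5 : Real.sinh |a2.re|^2 ≤ (|a2.re| * Real.exp 20)^2 :=
          pow_le_pow_left₀ hsinhnn hb3 2
        have hb6 : (|a2.re| * Real.exp 20)^2 = Real.exp 40 * a2.re^2 := by
          rw [mul_pow, sq_abs, ← hexp2040]; ring
        rw [hb4]
        linarith only [hb5, hb6]
      have hShm : Sh ≤ Real.exp 20 * m := by
        apply le_on_sq hSh0 (by positivity)
        rw [hShdef, abs_sinh_comp]
        have hxy : a2.re^2 + a2.im^2 ≤ m^2 := by
          rw [hm2]; linarith only [sq_nonneg (tAbs a1)]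
        have hsy : Real.sin a2.im^2 ≤ a2.im^2 := Real.sin_sq_le_sq
        have q1 : Real.exp 40*(a2.re^2+a2.im^2) ≤ Real.exp 40*m^2 :=
          mul_le_mul_of_nonneg_left hxy (by positivity)
        have q2 : (0:ℝ) ≤ (Real.exp 40 - 1)*a2.im^2 :=
          mul_nonneg (by linarith only [hE1]) (sq_nonneg _)
        have q3 : (Real.exp 20*m)^2 = Real.exp 40*m^2 := by
          rw [mul_pow, ← hexp2040]; ring
        linarith only [hsinhx, hsy, q1, q2, q3]
      have hChb : Ch ≤ 2*Real.exp 20 := by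
        apply le_on_sq hCh0 (by positivity)
        rw [hChdef, abs_cosh_comp]
        have hb1' : Real.sinh |a2.re| ≤ Real.exp 20 := by
          have := (sinh_le_cosh' |a2.re|).trans (cosh_le_exp |a2.re|)
          rw [abs_abs] at this
          exact this.trans (Real.exp_le_exp.2 hx20)
        have q1 : Real.sinh |a2.re|^2 ≤ Real.exp 20^2 := pow_le_pow_left₀ hsinhnn hb1' 2
        have q3 : (1:ℝ) ≤ Real.exp 20^2 := by
          calc (1:ℝ) = 1^2 := by norm_num
            _ ≤ Real.exp 20^2 := pow_le_pow_left₀ (by norm_num) hE20one 2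
        have q2 : (2*Real.exp 20)^2 = 4*Real.exp 20^2 := by ring
        have q5 : Real.cos a2.im^2 ≤ 1 := Real.cos_sq_le_one a2.im
        rw [hb4]
        linarith only [q1, q2, q3, q5]
      have hkm2 : (0:ℝ) < cK κ * m^2 := by positivity
      have hD2sq : (cK κ * m^2)^2 ≤ D^2 := pow_le_pow_left₀ hkm2.le hD1 2
      have hD3cube : (cK κ * m^2)^3 ≤ D^3 := pow_le_pow_left₀ hkm2.le hD1 3
      refine ⟨?_, ?_, ?_⟩
      · calc (1/(4*π)) * Sn / D ≤ m / (cK κ * m^2) :=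
            dchain (by positivity) (hpSn.trans hSnm) hkm2 hD1
          _ = t / m := by rw [htdef]; field_simp
          _ ≤ C / m := (div_le_div_iff_of_pos_right hm0).2 hcmp1
          _ = C / m^1 := by rw [pow_one]
      · calc (1/(4*π)) * Sn * Sh / D^2 ≤ (Real.exp 20 * m^2) / (cK κ * m^2)^2 := by
              apply dchain (by positivity) ?_ (by positivity) hD2sq
              have hb := mul_le_mul hSnm hShm hSh0 hm0.le
              have hb' : (1/(4*π)) * Sn * Sh ≤ Sn * Sh :=
                mul_le_mul_of_nonneg_right hpSn hSh0
              have he : m * (Real.exp 20 * m) = Real.exp 20 * m^2 := by ring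
              linarith only [hb, hb', he]
          _ = Real.exp 20 * t^2 / m^2 := by rw [htdef]; field_simp
          _ ≤ C / m^2 := (div_le_div_iff_of_pos_right (by positivity)).2 hcmp2
      · have hsplit : (1/(4*π))*Sn*(2*Sh^2 + Ch*D)/D^3
            = (1/(4*π))*Sn*(2*Sh^2)/D^3 + (1/(4*π))*Sn*Ch/D^2 := by
          field_simp
        have h3a : (1/(4*π))*Sn*(2*Sh^2)/D^3 ≤ (2*Real.exp 40 * m^3) / (cK κ * m^2)^3 := by
          apply dchain (by positivity) ?_ (by positivity) hD3cube
          have hsq : Sh^2 ≤ (Real.exp 20 * m)^2 := pow_le_pow_left₀ hSh0 hShm 2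
          have he : (Real.exp 20 * m)^2 = Real.exp 40 * m^2 := by
            rw [mul_pow, ← hexp2040]; ring
          have hb' : (1/(4*π))*Sn*(2*Sh^2) ≤ Sn*(2*Sh^2) := by
            have : (0:ℝ) ≤ 2*Sh^2 := by positivity
            calc (1/(4*π))*Sn*(2*Sh^2) = ((1/(4*π))*Sn)*(2*Sh^2) := by ring
              _ ≤ Sn*(2*Sh^2) := mul_le_mul_of_nonneg_right hpSn this
          have hb2' : Sn*(2*Sh^2) ≤ m*(2*(Real.exp 40 * m^2)) := by
            apply mul_le_mul hSnm ?_ (by positivity) hm0.le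
            linarith only [hsq, he]
          have he2 : m*(2*(Real.exp 40 * m^2)) = 2*Real.exp 40 * m^3 := by ring
          linarith only [hb', hb2', he2]
        have h3b : (1/(4*π))*Sn*Ch/D^2 ≤ (2*Real.exp 20 * m) / (cK κ * m^2)^2 := by
          apply dchain (by positivity) ?_ (by positivity) hD2sq
          have hb' : (1/(4*π))*Sn*Ch ≤ Sn*Ch := mul_le_mul_of_nonneg_right hpSn hCh0
          have hb2' : Sn*Ch ≤ m*(2*Real.exp 20) := mul_le_mul hSnm hChb hCh0 hm0.le
          have he : m*(2*Real.exp 20) = 2*Real.exp 20*m := by ring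
          linarith only [hb', hb2', he]
        have e3a : (2*Real.exp 40 * m^3) / (cK κ * m^2)^3 = 2*Real.exp 40 * t^3 / m^3 := by
          rw [htdef]; field_simp
        have e3b : (2*Real.exp 20 * m) / (cK κ * m^2)^2 = 2*Real.exp 20 * t^2 / m^3 := by
          rw [htdef]; field_simp
        rw [hsplit]
        calc (1/(4*π))*Sn*(2*Sh^2)/D^3 + (1/(4*π))*Sn*Ch/D^2
            ≤ 2*Real.exp 40 * t^3 / m^3 + 2*Real.exp 20 * t^2 / m^3 := by
              rw [← e3a, ← e3b]; exact add_le_add h3a h3b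
          _ = (2*Real.exp 40 * t^3 + 2*Real.exp 20 * t^2) / m^3 := by rw [← add_div]
          _ ≤ C / m^3 := by
              apply (div_le_div_iff_of_pos_right (by positivity)).2
              linarith only [hcmp3, hcmp4]
    · -- large regime
      have hm1 : (1:ℝ) ≤ m := by linarith only [hm20]
      have htpi : tAbs a1 ≤ π := tAbs_le_pi a1
      have hy2' : a2.im^2 ≤ 4 := by
        have q1 : |a2.im| ≤ 2 := by linarith only [h2, hπ4]
        have q2 : |a2.im|^2 ≤ 2^2 := pow_le_pow_left₀ (abs_nonneg _) q1 2
        have q3 := sq_abs a2.im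
        linarith only [q2, q3]
      have ht2' : tAbs a1^2 ≤ 16 := by
        have q1 : tAbs a1 ≤ 4 := by linarith only [htpi, hπ4]
        have q2 : tAbs a1^2 ≤ 4^2 := pow_le_pow_left₀ (tAbs_nonneg a1) q1 2
        linarith only [q2]
      have hx2 : m^2 - 20 ≤ a2.re^2 := by
        rw [hm2]; linarith only [hy2', ht2']
      have hm400 : (400:ℝ) ≤ m^2 := by
        have := mul_le_mul hm20.le hm20.le (by norm_num) hm0.le
        have e : m*m = m^2 := by ring
        linarith only [this, e]
      have hxm2 : m/2 ≤ |a2.re| := by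
        apply le_on_sq (by positivity) (abs_nonneg _)
        rw [sq_abs]
        have e : (m/2)^2 = m^2/4 := by ring
        linarith only [hx2, hm400, e]
      have hm6 : (64000000:ℝ) ≤ m^6 := by
        calc (64000000:ℝ) = 20^6 := by norm_num
          _ ≤ m^6 := pow_le_pow_left₀ (by norm_num) hm20.le 6
      have hDlow : m^6/12000000 ≤ D := by
        have c1 : (m/12)^6 ≤ (|a2.re|/6)^6 := by
          apply pow_le_pow_left₀ (by positivity)
          linarith only [hxm2]
        have c2 : (|a2.re|/6)^6 ≤ Real.exp |a2.re| := exp_ge_pow6 (abs_nonneg _)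
        have c3 : Real.exp |a2.re| ≤ 2*Real.cosh a2.re := exp_abs_le_two_cosh a2.re
        have c0 : (m/12)^6 = m^6/2985984 := by
          rw [div_pow]; norm_num
        have c4 : m^6/2985984 ≤ 2*Real.cosh a2.re := by
          rw [← c0]; linarith only [c1, c2, c3]
        linarith only [c4, hm6, hD2]
      have hDge1 : (1:ℝ) ≤ D := by linarith only [hDlow, hm6]
      have hcoshD : Real.cosh a2.re ≤ 2*D := by linarith only [hD2, hDge1]
      have hShD : Sh ≤ 2*D := by
        have hb : Sh ≤ Real.cosh a2.re := by
          apply le_on_sq hSh0 (Real.cosh_pos a2.re).le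
          rw [hShdef, abs_sinh_comp]
          linarith only [Real.sin_sq_le_one a2.im, Real.cosh_sq a2.re]
        linarith only [hb, hcoshD]
      have hChD : Ch ≤ 2*D := by
        have hb : Ch ≤ Real.cosh a2.re := by
          apply le_on_sq hCh0 (Real.cosh_pos a2.re).le
          rw [hChdef, abs_cosh_comp]
          linarith only [Real.cos_sq_le_one a2.im, Real.cosh_sq a2.re]
        linarith only [hb, hcoshD]
      have hm6pos : (0:ℝ) < m^6/12000000 := by positivity
      have hp1 : m^1 ≤ m^6 := pow_le_pow_right₀ hm1 (by norm_num)
      have hp2 : m^2 ≤ m^6 := pow_le_pow_right₀ hm1 (by norm_num)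
      have hp3 : m^3 ≤ m^6 := pow_le_pow_right₀ hm1 (by norm_num)
      have hone : (1:ℝ)/(m^6/12000000) = 12000000/m^6 := one_div_div _ _
      have hq1 : (1/(4*π))*Sn ≤ 1 := hpSn.trans hSn1
      refine ⟨?_, ?_, ?_⟩
      · calc (1/(4*π)) * Sn / D ≤ 1 / (m^6/12000000) :=
            dchain (by positivity) hq1 hm6pos hDlow
          _ = 12000000/m^6 := hone
          _ ≤ C / m^1 := dchain (by norm_num) (by linarith only [hcmp5]) (by positivity) hp1
      · have hnum : (1/(4*π)) * Sn * Sh ≤ 2*D := by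
          have := mul_le_mul_of_nonneg_right hq1 hSh0
          rw [one_mul] at this
          exact this.trans hShD
        calc (1/(4*π)) * Sn * Sh / D^2 ≤ (2*D) / D^2 :=
              dchain (by positivity) hnum (by positivity) le_rfl
          _ = 2 / D := by field_simp
          _ ≤ 2 / (m^6/12000000) := dchain (by norm_num) le_rfl hm6pos hDlow
          _ = 24000000/m^6 := by rw [div_div_eq_mul_div]; norm_num
          _ ≤ C / m^2 := dchain (by norm_num) (by linarith only [hcmp5]) (by positivity) hp2
      · have hnum : (1/(4*π)) * Sn * (2*Sh^2 + Ch*D) ≤ 10*D^2 := by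
          have b1 : Sh^2 ≤ (2*D)^2 := pow_le_pow_left₀ hSh0 hShD 2
          have b1' : (2*D)^2 = 4*D^2 := by ring
          have b2 : Ch*D ≤ (2*D)*D := mul_le_mul_of_nonneg_right hChD hD0.le
          have b2' : (2*D)*D = 2*D^2 := by ring
          have hin : 2*Sh^2 + Ch*D ≤ 10*D^2 := by linarith only [b1, b1', b2, b2']
          have hnn : (0:ℝ) ≤ 2*Sh^2 + Ch*D := by positivity
          have := mul_le_mul_of_nonneg_right hq1 hnn
          rw [one_mul] at this
          exact this.trans hin
        calc (1/(4*π)) * Sn * (2*Sh^2 + Ch*D) / D^3 ≤ (10*D^2) / D^3 := by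
              apply dchain ?_ hnum (by positivity) le_rfl
              positivity
          _ = 10 / D := by field_simp
          _ ≤ 10 / (m^6/12000000) := dchain (by norm_num) le_rfl hm6pos hDlow
          _ = 120000000/m^6 := by rw [div_div_eq_mul_div]; norm_num
          _ ≤ C / m^3 := dchain (by norm_num) (by linarith only [hcmp5]) (by positivity) hp3
  -- dispatch j
  intro j hj
  have hj' : j = 0 ∨ j = 1 ∨ j = 2 := by simpa using hj
  rcases hj' with rfl | rfl | rfl
  · rw [d0]; exact key.1
  · rw [d1]; exact key.2.1
  · exact d2.trans key.2.2


end MIPM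

open MIPM

/-- **Lemma on the good sets for `K2`.** For `κ ∈ (0,1/2)` the set `𝒰^κ` is
contained in `𝒰`, the boundaries intersect only in the point `0` of `𝕋 × ℂ` (i.e. in the
periodic set `{tAbs a1 = 0, a2 = 0}` of the cover `ℝ × ℂ`), and there is `C > 0` depending
only on `κ` with `|∂_{a2}^j K2(a)| ≤ C |a|_*^{-(1+j)}` for all `a ∈ 𝒰^κ`, `j = 0,1,2`. -/
theorem statement7 (κ : ℝ) (hκ : κ ∈ Set.Ioo (0:ℝ) (1/2)) :
    Uk κ ⊆ Uset ∧
    frontier (Uk κ) ∩ frontier Uset = {a : ℝ × ℂ | tAbs a.1 = 0 ∧ a.2 = 0} ∧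
    ∃ C > (0:ℝ), ∀ a ∈ Uk κ, ∀ j ∈ ({0, 1, 2} : Set ℕ),
      ‖iteratedDeriv j (fun w => K2 a.1 w) a.2‖
        ≤ C / (starNorm a.1 a.2) ^ (1 + j) := by
  obtain ⟨hκ0, hκ2⟩ := hκ
  refine ⟨Uk_subset_Uset hκ0 hκ2, frontier_inter hκ0 hκ2,
    (4*Real.exp 40 + 10^8) * ((1/cK κ)^3 + 1), ?_, ?_⟩
  · have := cK_pos hκ0 hκ2
    positivity
  · rintro ⟨a1, a2⟩ ⟨h1, h2⟩ j hj
    exact main_bound hκ0 hκ2 a1 a2 h1 h2 j hj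
end
end

section
/- Let γ0: T → ℝ extend holomorphically to U_{2ρ0} with 4‖Im γ0'‖_{L∞(U_{ρ0})} < 1, let α ∈ (0,1), R > 0, and let T ∈ (0,1) be as in the good-set lemma (so that ΔX_t^η takes values in the closure of 𝒰^{3/8} and t|y2−z2| ≤ C0|ΔX_t^η|_*). Then there is a constant C0 > 0 depending only on finitely many derivatives of γ0 such that for all η ∈ B_ρ with ‖η‖_ρ < R, ρ ∈ (0,ρ0), y ∈ Ω_ρ and t ∈ (0,T): ∫_{Ω_0} |ΔX_t^η(y,z)|_*^{−1} dz ≤ C0 |log t|. -/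
open MeasureTheory Real Set

noncomputable section

open MIPM

open intervalIntegral

lemma tAbs_aux {x : ℝ} (hx : x ∈ Ioc (-π) π) : |x - 2*π*⌊(x+π)/(2*π)⌋| = |x| := by
  have hπ := Real.pi_pos
  rcases eq_or_lt_of_le hx.2 with h | h
  · subst h
    have h1 : (π + π)/(2*π) = 1 := by field_simp; ring
    rw [h1]
    norm_num
    rw [show π - 2*π = -π by ring, abs_neg]
  · have h1 : ⌊(x+π)/(2*π)⌋ = 0 := by
      rw [Int.floor_eq_zero_iff]
      constructor
      · have := hx.1
        apply div_nonneg <;> linarith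
      · rw [div_lt_one (by linarith)]
        linarith
    rw [h1]
    norm_num

lemma neg_log_le_rpow (u : ℝ) : -Real.log |u| ≤ 2 * |u| ^ (-(1/2) : ℝ) := by
  rcases eq_or_ne u 0 with rfl | hu
  · simp
  · have hx : (0:ℝ) < |u| := abs_pos.2 hu
    have h1 : Real.log (|u| ^ (-(1/2):ℝ)) = (-(1/2)) * Real.log |u| := Real.log_rpow hx _
    have h2 : Real.log (|u| ^ (-(1/2):ℝ)) ≤ |u| ^ (-(1/2):ℝ) - 1 :=
      Real.log_le_sub_one_of_pos (by positivity)
    have h3 : (0:ℝ) ≤ |u| ^ (-(1/2):ℝ) := by positivity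
    linarith

lemma inner_eval {a : ℝ} (ha : 0 < a) :
    ∫ x in Ioc (-π) π, (|x| + a)⁻¹ = 2 * (Real.log (π + a) - Real.log a) := by
  have hπ := Real.pi_pos
  have hcont : Continuous fun x : ℝ => (|x| + a)⁻¹ :=
    Continuous.inv₀ (by continuity) (fun x => by positivity)
  rw [← intervalIntegral.integral_of_le (by linarith : -π ≤ π)]
  have h1 : ∫ x in (0:ℝ)..π, (|x| + a)⁻¹ = Real.log (π + a) - Real.log a := by
    rw [intervalIntegral.integral_congr (g := fun x => (x + a)⁻¹)
        (fun x hx => by rw [uIcc_of_le (le_of_lt hπ)] at hx; rw [abs_of_nonneg hx.1])]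
    rw [intervalIntegral.integral_comp_add_right (fun x => x⁻¹) a]
    rw [integral_inv (by rw [uIcc_of_le (by linarith)]; intro h; linarith [h.1, ha] )]
    · rw [zero_add, Real.log_div (by positivity) (ne_of_gt ha)]
  have h2 : ∫ x in (-π)..(0:ℝ), (|x| + a)⁻¹ = Real.log (π + a) - Real.log a := by
    have he : (fun x : ℝ => (|x| + a)⁻¹) = fun x => (|(-x)| + a)⁻¹ := by
      funext x; rw [abs_neg]
    rw [he, intervalIntegral.integral_comp_neg (fun x => (|x| + a)⁻¹)]
    simpa using h1
  rw [← intervalIntegral.integral_add_adjacent_intervals (a := -π) (b := 0) (c := π)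
    (hcont.intervalIntegrable _ _) (hcont.intervalIntegrable _ _), h1, h2]
  ring

lemma rpow_half_ii : IntervalIntegrable (fun u : ℝ => |u| ^ (-(1/2):ℝ)) volume (-4) 4 := by
  have h04 : IntervalIntegrable (fun u : ℝ => |u| ^ (-(1/2):ℝ)) volume 0 4 := by
    have h := intervalIntegrable_rpow' (a := 0) (b := 4) (by norm_num : (-1:ℝ) < -(1/2))
    rw [intervalIntegrable_iff] at h ⊢
    refine h.congr_fun (fun x hx => ?_) measurableSet_uIoc
    rw [uIoc_of_le (by norm_num : (0:ℝ) ≤ 4)] at hx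
    rw [abs_of_pos hx.1]
  have hneg : IntervalIntegrable (fun u : ℝ => |u| ^ (-(1/2):ℝ)) volume (-4) 0 := by
    have h := (IntervalIntegrable.iff_comp_neg (by simp)).mp h04
    simp only [abs_neg, neg_zero] at h
    exact h.symm
  exact hneg.trans h04

lemma rpow_half_val : ∫ u in (-4:ℝ)..4, |u| ^ (-(1/2):ℝ) = 8 := by
  have h42 : (4:ℝ) ^ ((1:ℝ)/2) = 2 := by
    rw [show (4:ℝ) = 2^(2:ℕ) by norm_num, ← Real.rpow_natCast 2 2,
      ← Real.rpow_mul (by norm_num)]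
    norm_num
  have h04 : ∫ u in (0:ℝ)..4, |u| ^ (-(1/2):ℝ) = 4 := by
    rw [intervalIntegral.integral_congr (g := fun x : ℝ => x ^ (-(1/2):ℝ))
      (fun x hx => by rw [uIcc_of_le (by norm_num : (0:ℝ) ≤ 4)] at hx; rw [abs_of_nonneg hx.1])]
    rw [integral_rpow (Or.inl (by norm_num))]
    rw [Real.zero_rpow (by norm_num)]
    rw [show (-(1/2):ℝ) + 1 = 1/2 by norm_num, h42]
    norm_num
  have hneg : ∫ u in (-4:ℝ)..0, |u| ^ (-(1/2):ℝ) = 4 := by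
    have he : (fun u : ℝ => |u| ^ (-(1/2):ℝ)) = fun u => |(-u)| ^ (-(1/2):ℝ) := by
      funext u; rw [abs_neg]
    rw [he, intervalIntegral.integral_comp_neg (fun u : ℝ => |u| ^ (-(1/2):ℝ))]
    simpa using h04
  have h1 : IntervalIntegrable (fun u : ℝ => |u| ^ (-(1/2):ℝ)) volume (-4) 0 :=
    rpow_half_ii.mono_set (by rw [uIcc_of_le (by norm_num : (-4:ℝ) ≤ 0), uIcc_of_le (by norm_num : (-4:ℝ) ≤ 4)]; intro x hx; exact ⟨hx.1, by linarith [hx.2]⟩)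
  have h2 : IntervalIntegrable (fun u : ℝ => |u| ^ (-(1/2):ℝ)) volume 0 4 :=
    rpow_half_ii.mono_set (by rw [uIcc_of_le (by norm_num : (0:ℝ) ≤ 4), uIcc_of_le (by norm_num : (-4:ℝ) ≤ 4)]; intro x hx; exact ⟨by linarith [hx.1], hx.2⟩)
  rw [← intervalIntegral.integral_add_adjacent_intervals h1 h2, h04, hneg]
  norm_num

lemma J_bound {y2 M : ℝ} (hy2 : y2 ∈ Ioo (-2:ℝ) 2) (hM : 0 < M) :
    ∫⁻ z2 in Ioo (-2:ℝ) 2, ENNReal.ofReal (8*M*|y2 - z2| ^ (-(1/2):ℝ))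
      ≤ ENNReal.ofReal (64*M) := by
  obtain ⟨hy2l, hy2r⟩ := hy2
  have hsub : uIcc (y2-2) (y2+2) ⊆ uIcc (-4:ℝ) 4 := by
    rw [uIcc_of_le (by linarith), uIcc_of_le (by norm_num : (-4:ℝ) ≤ 4)]
    intro x hx
    exact ⟨by linarith [hx.1], by linarith [hx.2]⟩
  have hiv2 : IntervalIntegrable (fun u : ℝ => |u| ^ (-(1/2):ℝ)) volume (y2-2) (y2+2) :=
    rpow_half_ii.mono_set hsub
  have hcomp : IntervalIntegrable (fun z2 : ℝ => |y2 - z2| ^ (-(1/2):ℝ)) volume (-2) 2 := by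
    have h := (hiv2.comp_sub_left y2).symm
    simpa using h
  have hIoo : IntegrableOn (fun z2 : ℝ => 8*M*|y2 - z2| ^ (-(1/2):ℝ)) (Ioo (-2:ℝ) 2) := by
    have h := (intervalIntegrable_iff_integrableOn_Ioc_of_le (by norm_num : (-2:ℝ) ≤ 2)).mp hcomp
    exact (h.mono_set Ioo_subset_Ioc_self).const_mul _
  rw [← ofReal_integral_eq_lintegral_ofReal hIoo
    (Filter.Eventually.of_forall (fun z2 => by positivity))]
  apply ENNReal.ofReal_le_ofReal
  rw [MeasureTheory.integral_const_mul]
  have hval : ∫ z2 in Ioo (-2:ℝ) 2, |y2 - z2| ^ (-(1/2):ℝ) ≤ 8 := by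
    rw [← MeasureTheory.integral_Ioc_eq_integral_Ioo,
      ← intervalIntegral.integral_of_le (by norm_num : (-2:ℝ) ≤ 2)]
    rw [intervalIntegral.integral_comp_sub_left (fun u : ℝ => |u| ^ (-(1/2):ℝ)) y2]
    rw [show y2 - -2 = y2 + 2 by ring]
    have h44 : IntegrableOn (fun u : ℝ => |u| ^ (-(1/2):ℝ)) (Ioc (-4:ℝ) 4) :=
      (intervalIntegrable_iff_integrableOn_Ioc_of_le (by norm_num : (-4:ℝ) ≤ 4)).mp rpow_half_ii
    rw [intervalIntegral.integral_of_le (by linarith : y2 - 2 ≤ y2 + 2)]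
    calc ∫ u in Ioc (y2-2) (y2+2), |u| ^ (-(1/2):ℝ)
        ≤ ∫ u in Ioc (-4:ℝ) 4, |u| ^ (-(1/2):ℝ) := by
          apply setIntegral_mono_set h44
            (Filter.Eventually.of_forall (fun u => by positivity))
          exact HasSubset.Subset.eventuallyLE
            (fun x hx => ⟨by linarith [hx.1], by linarith [hx.2]⟩)
      _ = 8 := by
          rw [← intervalIntegral.integral_of_le (by norm_num : (-4:ℝ) ≤ 4)]
          exact rpow_half_val
  nlinarith [hval]

lemma inner_bound {M t y2 z2 : ℝ} (hM : 1 ≤ M) (ht0 : 0 < t) (ht1 : t < 1)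
    (hy2 : y2 ∈ Ioo (-2:ℝ) 2) (hz2 : z2 ∈ Ioo (-2:ℝ) 2) (hne : z2 ≠ y2) :
    ∫⁻ z1 in Ioc (-π) π, ENNReal.ofReal (2*M*(|z1| + t*|y2 - z2|)⁻¹)
      ≤ (ENNReal.ofReal (4*M*Real.log (π+4)) + ENNReal.ofReal (4*M*|Real.log t|))
        + ENNReal.ofReal (8*M * |y2 - z2| ^ (-(1/2):ℝ)) := by
  have hM0 : (0:ℝ) < M := lt_of_lt_of_le one_pos hM
  have hπ := Real.pi_pos
  have hu0 : 0 < |y2 - z2| := abs_pos.2 (sub_ne_zero.2 (Ne.symm hne))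
  have hu4 : |y2 - z2| < 4 := by
    rw [abs_sub_lt_iff]
    obtain ⟨a1, a2⟩ := hy2
    obtain ⟨b1, b2⟩ := hz2
    constructor <;> linarith
  obtain ⟨a, hadef⟩ : ∃ a : ℝ, a = t * |y2 - z2| := ⟨_, rfl⟩
  have ha0 : 0 < a := hadef ▸ mul_pos ht0 hu0
  have hconta : Continuous fun x : ℝ => 2*M*(|x| + a)⁻¹ :=
    continuous_const.mul (Continuous.inv₀ (continuous_abs.add continuous_const)
      (fun x => ne_of_gt (add_pos_of_nonneg_of_pos (abs_nonneg x) ha0)))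
  have hint : IntegrableOn (fun x : ℝ => 2*M*(|x| + a)⁻¹) (Ioc (-π) π) :=
    hconta.integrableOn_Ioc
  rw [show (fun z1 : ℝ => ENNReal.ofReal (2*M*(|z1| + t*|y2 - z2|)⁻¹))
      = fun z1 : ℝ => ENNReal.ofReal (2*M*(|z1| + a)⁻¹) by rw [hadef]]
  rw [← ofReal_integral_eq_lintegral_ofReal hint
    (Filter.Eventually.of_forall (fun x => by positivity))]
  rw [MeasureTheory.integral_const_mul, inner_eval ha0]
  have hlog : 2*M*(2*(Real.log (π+a) - Real.log a))
      ≤ 4*M*Real.log (π+4) + 4*M*|Real.log t| + 8*M*|y2-z2| ^ (-(1/2):ℝ) := by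
    have e2 : Real.log a = Real.log t + Real.log |y2 - z2| := by
      rw [hadef]; exact Real.log_mul (ne_of_gt ht0) (ne_of_gt hu0)
    have ha4 : a < 4 := by
      rw [hadef]
      calc t * |y2 - z2| ≤ 1 * |y2 - z2| :=
            mul_le_mul_of_nonneg_right (le_of_lt ht1) (abs_nonneg _)
        _ < 4 := by linarith
    have e1 : Real.log (π + a) ≤ Real.log (π + 4) :=
      Real.log_le_log (by positivity) (by linarith)
    have e3 : -Real.log t ≤ |Real.log t| := neg_le_abs _
    have e4 : -Real.log |y2 - z2| ≤ 2 * |y2 - z2| ^ (-(1/2):ℝ) := neg_log_le_rpow _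
    have heq : 2*M*(2*(Real.log (π+a) - Real.log a))
        = 4*M*Real.log (π+a) + 4*M*(-Real.log t) + 4*M*(-Real.log |y2 - z2|) := by
      rw [e2]; ring
    have c1 := mul_le_mul_of_nonneg_left e1 (by positivity : (0:ℝ) ≤ 4*M)
    have c3 := mul_le_mul_of_nonneg_left e3 (by positivity : (0:ℝ) ≤ 4*M)
    have c4 := mul_le_mul_of_nonneg_left e4 (by positivity : (0:ℝ) ≤ 4*M)
    rw [heq]
    nlinarith [c1, c3, c4]
  exact (ENNReal.ofReal_le_ofReal hlog).trans
    ((ENNReal.ofReal_add_le).trans (add_le_add_left ENNReal.ofReal_add_le _))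

lemma core_bound {F : ℝ×ℝ → ℝ} {M t y2 : ℝ} (hM : 1 ≤ M) (ht0 : 0 < t) (ht1 : t < 1)
    (hy2 : y2 ∈ Ioo (-2:ℝ) 2)
    (hFnn : ∀ z, 0 ≤ F z)
    (hptw : ∀ z ∈ (Ioc (-π) π ×ˢ Ioo (-2:ℝ) 2 : Set (ℝ×ℝ)), z.1 ≠ 0 →
      F z ≤ 2*M*(|z.1| + t*|y2 - z.2|)⁻¹) :
    (∫ z in (Ioc (-π) π ×ˢ Ioo (-2:ℝ) 2 : Set (ℝ×ℝ)), F z)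
      ≤ 16*M*Real.log (π+4) + 64*M + 16*M*|Real.log t| := by
  have hM0 : (0:ℝ) < M := lt_of_lt_of_le one_pos hM
  have hπ := Real.pi_pos
  have hlogpos : (0:ℝ) ≤ Real.log (π+4) := Real.log_nonneg (by linarith)
  have hB0 : (0:ℝ) ≤ 16*M*Real.log (π+4) + 64*M + 16*M*|Real.log t| := by positivity
  by_cases hfi : IntegrableOn F (Ioc (-π) π ×ˢ Ioo (-2:ℝ) 2) volume
  swap
  · rw [integral_undef hfi]; exact hB0
  have hFnn' : 0 ≤ᵐ[volume.restrict ((Ioc (-π) π ×ˢ Ioo (-2:ℝ) 2 : Set (ℝ×ℝ)))] F :=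
    Filter.Eventually.of_forall hFnn
  rw [integral_eq_lintegral_of_nonneg_ae hFnn' hfi.aestronglyMeasurable]
  have hnull : (volume : Measure (ℝ×ℝ)) {p : ℝ×ℝ | p.1 = 0} = 0 := by
    have he : {p : ℝ×ℝ | p.1 = 0} = ({0} : Set ℝ) ×ˢ (univ : Set ℝ) := by
      ext p
      simp only [Set.mem_prod, Set.mem_singleton_iff, Set.mem_univ, and_true, Set.mem_setOf_eq]
    rw [he, Measure.volume_eq_prod, Measure.prod_prod]
    simp
  have hcontd : Continuous fun z : ℝ×ℝ => |z.1| + t * |y2 - z.2| :=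
    ((continuous_fst.abs).add (continuous_const.mul ((continuous_const.sub continuous_snd).abs)))
  have hmeas_g : Measurable fun z : ℝ×ℝ => ENNReal.ofReal (2*M * (|z.1| + t * |y2 - z.2|)⁻¹) :=
    (hcontd.measurable.inv.const_mul (2*M)).ennreal_ofReal
  have hstep1 : ∫⁻ z in (Ioc (-π) π ×ˢ Ioo (-2:ℝ) 2 : Set (ℝ×ℝ)), ENNReal.ofReal (F z)
      ≤ ∫⁻ z in (Ioc (-π) π ×ˢ Ioo (-2:ℝ) 2 : Set (ℝ×ℝ)),
          ENNReal.ofReal (2*M * (|z.1| + t * |y2 - z.2|)⁻¹) := by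
    apply lintegral_mono_ae
    have h1 : ∀ᵐ z ∂(volume.restrict ((Ioc (-π) π ×ˢ Ioo (-2:ℝ) 2 : Set (ℝ×ℝ)))),
        z ∈ (Ioc (-π) π ×ˢ Ioo (-2:ℝ) 2 : Set (ℝ×ℝ)) :=
      ae_restrict_mem (measurableSet_Ioc.prod measurableSet_Ioo)
    have h2 : ∀ᵐ z : ℝ×ℝ ∂(volume.restrict ((Ioc (-π) π ×ˢ Ioo (-2:ℝ) 2 : Set (ℝ×ℝ)))),
        z.1 ≠ 0 := by
      apply ae_restrict_of_ae
      rw [ae_iff]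
      simpa using hnull
    filter_upwards [h1, h2] with z hz hz1
    exact ENNReal.ofReal_le_ofReal (hptw z hz hz1)
  have hstep2 : ∫⁻ z in (Ioc (-π) π ×ˢ Ioo (-2:ℝ) 2 : Set (ℝ×ℝ)),
        ENNReal.ofReal (2*M * (|z.1| + t * |y2 - z.2|)⁻¹)
      = ∫⁻ z2 in Ioo (-2:ℝ) 2, ∫⁻ z1 in Ioc (-π) π,
          ENNReal.ofReal (2*M * (|z1| + t * |y2 - z2|)⁻¹) := by
    rw [Measure.volume_eq_prod, ← Measure.prod_restrict]
    exact lintegral_prod_symm _ hmeas_g.aemeasurable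
  have houter : ∫⁻ z2 in Ioo (-2:ℝ) 2, ∫⁻ z1 in Ioc (-π) π,
        ENNReal.ofReal (2*M * (|z1| + t * |y2 - z2|)⁻¹)
      ≤ ENNReal.ofReal (16*M*Real.log (π+4) + 64*M + 16*M*|Real.log t|) := by
    have hmono : ∫⁻ z2 in Ioo (-2:ℝ) 2, ∫⁻ z1 in Ioc (-π) π,
          ENNReal.ofReal (2*M * (|z1| + t * |y2 - z2|)⁻¹)
        ≤ ∫⁻ z2 in Ioo (-2:ℝ) 2,
            ((ENNReal.ofReal (4*M*Real.log (π+4)) + ENNReal.ofReal (4*M*|Real.log t|))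
              + ENNReal.ofReal (8*M * |y2 - z2| ^ (-(1/2):ℝ))) := by
      apply lintegral_mono_ae
      have h1 : ∀ᵐ z2 ∂(volume.restrict (Ioo (-2:ℝ) 2)), z2 ∈ Ioo (-2:ℝ) 2 :=
        ae_restrict_mem measurableSet_Ioo
      have h2 : ∀ᵐ z2 : ℝ ∂(volume.restrict (Ioo (-2:ℝ) 2)), z2 ≠ y2 := by
        apply ae_restrict_of_ae
        rw [ae_iff]
        simpa using measure_singleton y2
      filter_upwards [h1, h2] with z2 hz2 hne
      exact inner_bound hM ht0 ht1 hy2 hz2 hne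
    refine hmono.trans ?_
    rw [lintegral_add_left measurable_const, setLIntegral_const]
    have hvol : volume (Ioo (-2:ℝ) 2) = ENNReal.ofReal 4 := by
      rw [Real.volume_Ioo]; norm_num
    rw [hvol]
    refine le_trans (add_le_add_right (J_bound hy2 hM0) _) ?_
    rw [← ENNReal.ofReal_add (by positivity) (by positivity),
      ← ENNReal.ofReal_mul (by positivity), ← ENNReal.ofReal_add (by positivity) (by positivity)]
    apply ENNReal.ofReal_le_ofReal
    nlinarith [abs_nonneg (Real.log t), hlogpos, hM0]
  have hchain : ∫⁻ z in (Ioc (-π) π ×ˢ Ioo (-2:ℝ) 2 : Set (ℝ×ℝ)), ENNReal.ofReal (F z)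
      ≤ ENNReal.ofReal (16*M*Real.log (π+4) + 64*M + 16*M*|Real.log t|) :=
    hstep1.trans (hstep2.trans_le houter)
  calc (∫⁻ z in (Ioc (-π) π ×ˢ Ioo (-2:ℝ) 2 : Set (ℝ×ℝ)), ENNReal.ofReal (F z)).toReal
      ≤ (ENNReal.ofReal (16*M*Real.log (π+4) + 64*M + 16*M*|Real.log t|)).toReal :=
        ENNReal.toReal_mono ENNReal.ofReal_ne_top hchain
    _ = 16*M*Real.log (π+4) + 64*M + 16*M*|Real.log t| := ENNReal.toReal_ofReal hB0

lemma tAbs_eq {x : ℝ} (hx : x ∈ Ioc (-π) π) : tAbs x = |x| := tAbs_aux hx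

/-- **Lemma 6.8.** -/
theorem statement10 (r0 α R T : ℝ) (γ : ℂ → ℂ) (hγ : GoodGamma r0 γ)
    (hα : α ∈ Set.Ioo (0:ℝ) 1) (hR : 0 < R) (hT : T ∈ Set.Ioo (0:ℝ) 1)
    (hGS : ∃ C0' > (0:ℝ), GoodSetProp γ α R C0' T r0) :
    ∃ C0 > (0:ℝ), ∀ r ∈ Set.Ioo (0:ℝ) r0, ∀ η : ℂ → ℝ → ℂ, MemB r η → Bnorm r η < R →
      ∀ y ∈ Om r, ∀ t ∈ Set.Ioo (0:ℝ) T,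
        (∫ z in Om0, (starNorm z.1 (DX2 γ α η t y.1 y.2 z))⁻¹) ≤ C0 * |Real.log t| := by
  obtain ⟨C0', hC0', hGSp⟩ := hGS
  have hπ := Real.pi_pos
  have hM1 : (1:ℝ) ≤ max C0' 1 := le_max_right _ _
  have hM0 : (0:ℝ) < max C0' 1 := lt_of_lt_of_le one_pos hM1
  have hlogT : Real.log T < 0 := Real.log_neg hT.1 hT.2
  have hLT : (0:ℝ) < |Real.log T| := abs_pos.2 (ne_of_lt hlogT)
  have hlogpos : (0:ℝ) ≤ Real.log (π+4) := Real.log_nonneg (by linarith)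
  refine ⟨(16*(max C0' 1)*Real.log (π+4) + 64*(max C0' 1)) / |Real.log T| + 16*(max C0' 1),
    by positivity, ?_⟩
  intro r hr η hη hηR y hy t ht
  have ht0 : 0 < t := ht.1
  have ht1 : t < 1 := lt_trans ht.2 hT.2
  have hlt : Real.log t < 0 := Real.log_neg ht0 ht1
  have hlogt : |Real.log T| ≤ |Real.log t| := by
    rw [abs_of_neg hlt, abs_of_neg hlogT]
    have := Real.log_le_log ht0 (le_of_lt ht.2)
    linarith
  have hy2 : y.2 ∈ Ioo (-2:ℝ) 2 := hy.2
  have hptw : ∀ z ∈ (Ioc (-π) π ×ˢ Ioo (-2:ℝ) 2 : Set (ℝ×ℝ)), z.1 ≠ 0 →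
      (starNorm z.1 (DX2 γ α η t y.1 y.2 z))⁻¹
        ≤ 2*(max C0' 1)*(|z.1| + t*|y.2 - z.2|)⁻¹ := by
    intro z hz hz1
    have hGz := hGSp r hr η hη hηR t ⟨le_of_lt ht0, ht.2⟩ y hy z hz
    have hsnn : 0 ≤ starNorm z.1 (DX2 γ α η t y.1 y.2 z) := Real.sqrt_nonneg _
    have h1 : |z.1| ≤ starNorm z.1 (DX2 γ α η t y.1 y.2 z) := by
      have htA : tAbs z.1 = |z.1| := tAbs_eq hz.1
      calc |z.1| = Real.sqrt (|z.1|^2) := (Real.sqrt_sq (abs_nonneg _)).symm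
        _ ≤ Real.sqrt ((tAbs z.1)^2 + ‖DX2 γ α η t y.1 y.2 z‖^2) := by
            rw [htA]
            exact Real.sqrt_le_sqrt (le_add_of_nonneg_right (sq_nonneg _))
        _ = starNorm z.1 (DX2 γ α η t y.1 y.2 z) := rfl
    have h2 : t * |y.2 - z.2| ≤ (max C0' 1) * starNorm z.1 (DX2 γ α η t y.1 y.2 z) :=
      le_trans hGz.2 (mul_le_mul_of_nonneg_right (le_max_left _ _) hsnn)
    have hd : 0 < |z.1| + t*|y.2 - z.2| :=
      add_pos_of_pos_of_nonneg (abs_pos.2 hz1) (by positivity)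
    have key : |z.1| + t*|y.2 - z.2|
        ≤ 2*(max C0' 1) * starNorm z.1 (DX2 γ α η t y.1 y.2 z) := by
      nlinarith [mul_nonneg (sub_nonneg.2 hM1) hsnn]
    calc (starNorm z.1 (DX2 γ α η t y.1 y.2 z))⁻¹
        ≤ ((|z.1| + t*|y.2 - z.2|) / (2*(max C0' 1)))⁻¹ := by
          apply inv_anti₀ (by positivity)
          rw [div_le_iff₀ (by positivity)]
          nlinarith
      _ = 2*(max C0' 1)*(|z.1| + t*|y.2 - z.2|)⁻¹ := by rw [inv_div]; ring
  have hcore := core_bound (F := fun z : ℝ×ℝ => (starNorm z.1 (DX2 γ α η t y.1 y.2 z))⁻¹)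
    hM1 ht0 ht1 hy2 (fun z => inv_nonneg.2 (Real.sqrt_nonneg _)) hptw
  have hBC : 16*(max C0' 1)*Real.log (π+4) + 64*(max C0' 1) + 16*(max C0' 1)*|Real.log t|
      ≤ ((16*(max C0' 1)*Real.log (π+4) + 64*(max C0' 1)) / |Real.log T| + 16*(max C0' 1))
        * |Real.log t| := by
    have h1 : 16*(max C0' 1)*Real.log (π+4) + 64*(max C0' 1)
        = (16*(max C0' 1)*Real.log (π+4) + 64*(max C0' 1)) / |Real.log T| * |Real.log T| :=
      (div_mul_cancel₀ _ (ne_of_gt hLT)).symm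
    have h2 : (16*(max C0' 1)*Real.log (π+4) + 64*(max C0' 1)) / |Real.log T| * |Real.log T|
        ≤ (16*(max C0' 1)*Real.log (π+4) + 64*(max C0' 1)) / |Real.log T| * |Real.log t| :=
      mul_le_mul_of_nonneg_left hlogt (by positivity)
    rw [add_mul]
    linarith
  exact le_trans hcore hBC
end
end

section
/- Let R0 > 0 and let ω ∈ L∞(T×ℝ) have support contained in T×(−R0,R0) and satisfy ∫_T ω(y1,y2) dy1 = 0 for almost every y2 ∈ ℝ. Define v(x) := ∫_{T×ℝ} K(x−y) ω(y) dy, where K(z) = (1/(4π)) (−sinh(z2), sin(z1))/(cosh(z2) − cos(z1)). Then there exist constants C, R > 0, depending only on R0 and ‖ω‖_{L∞}, such that |v(x)| ≤ C e^{−|x2|} for all x ∈ T×ℝ with |x2| ≥ R. -/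
open MeasureTheory Real Set

noncomputable section

open MIPM

lemma measK : Measurable K := by
  unfold K
  apply Measurable.smul (f := fun z : ℝ × ℝ => ((4*π) * (Real.cosh z.2 - Real.cos z.1))⁻¹)
    (g := fun z : ℝ × ℝ => ((-Real.sinh z.2, Real.sin z.1) : ℝ × ℝ))
  · exact ((measurable_const.mul ((Real.continuous_cosh.measurable.comp measurable_snd).sub
      (Real.continuous_cos.measurable.comp measurable_fst)))).inv
  · exact ((Real.continuous_sinh.measurable.comp measurable_snd).neg).prodMk
      (Real.continuous_sin.measurable.comp measurable_fst)

lemma kest (s u t : ℝ) (hs : s = 1 ∨ s = -1) (hst : 2 ≤ s * t) :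
    ‖K (u, t) - (-(s/(4*π)), 0)‖ ≤ Real.exp (-|t|) := by
  have habs : 2 ≤ |t| := by
    rcases hs with h | h <;> subst h
    · rw [one_mul] at hst; exact hst.trans (le_abs_self t)
    · simp only [neg_one_mul] at hst; exact hst.trans (neg_le_abs t)
  have hexp2 : (4:ℝ) ≤ Real.exp 2 := by
    have h1 : (2:ℝ) ≤ Real.exp 1 := by nlinarith [Real.add_one_le_exp (1:ℝ)]
    have : Real.exp 2 = Real.exp 1 * Real.exp 1 := by
      rw [← Real.exp_add]; norm_num
    nlinarith [Real.exp_pos (1:ℝ)]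
  have hexp : (4:ℝ) ≤ Real.exp |t| := hexp2.trans (Real.exp_le_exp.2 habs)
  have hcosh : Real.exp |t| / 2 ≤ Real.cosh t := by
    rw [Real.cosh_eq]
    rcases abs_cases t with ⟨h, _⟩ | ⟨h, _⟩ <;> rw [h] <;>
      nlinarith [Real.exp_pos t, Real.exp_pos (-t)]
  set D := Real.cosh t - Real.cos u with hDdef
  have hDlow : Real.exp |t| / 4 ≤ D := by nlinarith [Real.cos_le_one u]
  have hDpos : 0 < D := by nlinarith
  have hkey : s * D - Real.sinh t = s * (Real.exp (-|t|) - Real.cos u) := by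
    rcases hs with h | h <;> subst h
    · have ht0 : (0:ℝ) ≤ t := by nlinarith
      rw [abs_of_nonneg ht0, hDdef]
      have := Real.cosh_sub_sinh t
      ring_nf
      ring_nf at this
      linarith
    · have ht0 : t ≤ 0 := by nlinarith
      rw [abs_of_nonpos ht0, neg_neg, hDdef]
      have := Real.cosh_add_sinh t
      ring_nf
      ring_nf at this
      linarith
  have h4D : (4*π*D) ≠ 0 := by positivity
  have hKval : K (u, t) - (-(s/(4*π)), 0)
      = ((4*π*D)⁻¹ * (s*(Real.exp (-|t|) - Real.cos u)), (4*π*D)⁻¹ * Real.sin u) := by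
    unfold K
    simp only [Prod.smul_mk, smul_eq_mul, Prod.mk_sub_mk, sub_zero]
    refine Prod.ext ?_ rfl
    simp only
    rw [← hDdef]
    field_simp
    linear_combination hkey
  rw [hKval, Prod.norm_def]
  have hpi : (2:ℝ) ≤ π := by nlinarith [Real.pi_gt_three]
  have hA : (4*π*D)⁻¹ ≤ Real.exp (-|t|) / π := by
    rw [Real.exp_neg, div_eq_mul_inv, ← mul_inv]
    apply inv_anti₀ (by positivity)
    nlinarith [Real.pi_pos]
  have hApos : (0:ℝ) < (4*π*D)⁻¹ := by positivity
  have he1 : Real.exp (-|t|) ≤ 1 := Real.exp_le_one_iff.2 (by linarith [abs_nonneg t])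
  have hepos := Real.exp_pos (-|t|)
  apply max_le
  · rw [Real.norm_eq_abs, abs_mul, abs_of_pos hApos, abs_mul]
    have hs1 : |s| = 1 := by rcases hs with h | h <;> simp [h]
    rw [hs1, one_mul]
    have : |Real.exp (-|t|) - Real.cos u| ≤ 2 := by
      rw [abs_le]; constructor <;> nlinarith [Real.cos_le_one u, Real.neg_one_le_cos u]
    calc (4*π*D)⁻¹ * |Real.exp (-|t|) - Real.cos u| ≤ (Real.exp (-|t|) / π) * 2 :=
          mul_le_mul hA this (abs_nonneg _) (by positivity)
      _ ≤ Real.exp (-|t|) := by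
          rw [div_mul_eq_mul_div, div_le_iff₀ (by positivity : (0:ℝ) < π)]; nlinarith
  · rw [Real.norm_eq_abs, abs_mul, abs_of_pos hApos]
    calc (4*π*D)⁻¹ * |Real.sin u| ≤ (Real.exp (-|t|) / π) * 1 :=
          mul_le_mul hA (Real.abs_sin_le_one u) (abs_nonneg _) (by positivity)
      _ ≤ Real.exp (-|t|) := by
          rw [mul_one, div_le_iff₀ (by positivity : (0:ℝ) < π)]; nlinarith


lemma helper {E : Type*} [NormedAddCommGroup E] [NormedSpace ℝ E] (R0 : ℝ) (hR0 : 0 < R0)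
    (f : ℝ × ℝ → E) (hm : AEStronglyMeasurable f (volume.restrict D2)) (c : ℝ)
    (hb : ∀ y ∈ (Ioc (-π) π ×ˢ Ioo (-R0) R0 : Set (ℝ × ℝ)), ‖f y‖ ≤ c)
    (h0 : ∀ y : ℝ × ℝ, R0 ≤ |y.2| → f y = 0) :
    IntegrableOn f D2 ∧ ‖∫ y in D2, f y‖ ≤ c * (2*π * (2*R0)) := by
  set S : Set (ℝ × ℝ) := Ioc (-π) π ×ˢ Ioo (-R0) R0 with hSdef
  have hSm : MeasurableSet S := measurableSet_Ioc.prod measurableSet_Ioo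
  have hD2m : MeasurableSet D2 := by
    unfold D2; exact measurableSet_Ioc.prod MeasurableSet.univ
  have hSsub : S ⊆ D2 := by
    unfold D2; exact Set.prod_mono_right (subset_univ _)
  have hvol : volume S = ENNReal.ofReal (2*π) * ENNReal.ofReal (2*R0) := by
    rw [hSdef, Measure.volume_eq_prod, Measure.prod_prod, Real.volume_Ioc, Real.volume_Ioo]
    congr 1 <;> ring_nf
  have hvolS : volume S < ⊤ := by rw [hvol]; exact ENNReal.mul_lt_top ENNReal.ofReal_lt_top ENNReal.ofReal_lt_top
  have hvolt : (volume S).toReal = 2*π * (2*R0) := by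
    rw [hvol, ENNReal.toReal_mul, ENNReal.toReal_ofReal (by positivity),
      ENNReal.toReal_ofReal (by positivity)]
  have hzero : ∀ y ∈ D2 \ S, f y = 0 := by
    intro y hy
    apply h0
    obtain ⟨hyD, hyS⟩ := hy
    unfold D2 at hyD
    have h1 : y.1 ∈ Ioc (-π) π := hyD.1
    have h2 : y.2 ∉ Ioo (-R0) R0 := fun h => hyS ⟨h1, h⟩
    rw [mem_Ioo, not_and_or, not_lt, not_lt] at h2
    rcases h2 with h | h
    · exact le_abs.2 (Or.inr (by linarith))
    · exact le_abs.2 (Or.inl h)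
  have hmS : AEStronglyMeasurable f (volume.restrict S) :=
    hm.mono_measure (Measure.restrict_mono hSsub le_rfl)
  have hIS : IntegrableOn f S := by
    refine Integrable.mono' (g := fun _ => c) (integrableOn_const hvolS.ne) hmS ?_
    exact ae_restrict_of_forall_mem hSm hb
  have hIDS : IntegrableOn f (D2 \ S) := by
    rw [integrableOn_congr_fun hzero (hD2m.diff hSm)]
    exact integrableOn_zero
  have hunion : S ∪ (D2 \ S) = D2 := Set.union_diff_cancel hSsub
  have hInt : IntegrableOn f D2 := by
    rw [← hunion]; exact hIS.union hIDS
  refine ⟨hInt, ?_⟩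
  rw [← hunion, setIntegral_union Set.disjoint_sdiff_right (hD2m.diff hSm) hIS hIDS,
    setIntegral_eq_zero_of_forall_eq_zero hzero, add_zero]
  calc ‖∫ y in S, f y‖ ≤ c * (volume S).toReal :=
        norm_setIntegral_le_of_norm_le_const hvolS hb
    _ = c * (2*π * (2*R0)) := by rw [hvolt]


/-- **Appendix C, decay of the velocity.** Let `ω ∈ L∞(𝕋×ℝ)` be supported in
`𝕋 × (-R0,R0)` with zero horizontal mean for a.e. `x₂`. Then the Biot–Savart velocity
`v(x) = ∫ K(x-y) ω(y) dy` satisfies `|v(x)| ≤ C e^{-|x₂|}` for `|x₂| ≥ R`, with constants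
`C, R > 0` depending only on `R0` and `‖ω‖_{L∞}`. -/
theorem statement19 (R0 : ℝ) (hR0 : 0 < R0) (ω : ℝ × ℝ → ℝ)
    (hmeas : Measurable ω) (M : ℝ) (hM : ∀ x, |ω x| ≤ M)
    (hper : ∀ x1 x2 : ℝ, ω (x1 + 2*π, x2) = ω (x1, x2))
    (hsupp : ∀ x : ℝ × ℝ, R0 ≤ |x.2| → ω x = 0)
    (hmean : ∀ᵐ y2 : ℝ, (∫ y1 in Set.Ioc (-π) π, ω (y1, y2)) = 0) :
    ∃ C > (0:ℝ), ∃ R > (0:ℝ), ∀ x : ℝ × ℝ, R ≤ |x.2| →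
      ‖∫ y in D2, ω y • K (x - y)‖ ≤ C * Real.exp (-|x.2|) := by
  have hM0 : 0 ≤ M := (abs_nonneg _).trans (hM 0)
  refine ⟨4*π*R0*M*Real.exp R0 + 1, by positivity, R0 + 2, by positivity, ?_⟩
  intro x hx
  set s : ℝ := if 0 ≤ x.2 then 1 else -1 with hsdef
  have hs : s = 1 ∨ s = -1 := by
    rw [hsdef]; split <;> simp
  set c : ℝ × ℝ := (-(s/(4*π)), 0) with hcdef
  set F : ℝ × ℝ → ℝ × ℝ := fun y => ω y • (K (x - y) - c) with hFdef
  set g : ℝ × ℝ → ℝ × ℝ := fun y => ω y • c with hgdef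
  have hFm : AEStronglyMeasurable F (volume.restrict D2) :=
    (hmeas.smul (((measK.comp (measurable_const.sub measurable_id)).sub
      measurable_const))).aestronglyMeasurable
  have hgm : AEStronglyMeasurable g (volume.restrict D2) :=
    (hmeas.smul measurable_const).aestronglyMeasurable
  have hFb : ∀ y ∈ (Ioc (-π) π ×ˢ Ioo (-R0) R0 : Set (ℝ × ℝ)),
      ‖F y‖ ≤ M * (Real.exp R0 * Real.exp (-|x.2|)) := by
    intro y hy
    have hy2 : y.2 ∈ Ioo (-R0) R0 := hy.2
    have hst : 2 ≤ s * (x.2 - y.2) := by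
      rcases le_or_gt 0 x.2 with h | h
      · have hs1 : s = 1 := by rw [hsdef, if_pos h]
        rw [hs1, one_mul]
        rw [abs_of_nonneg h] at hx
        linarith [hy2.2]
      · have hs1 : s = -1 := by rw [hsdef, if_neg (not_le.2 h)]
        rw [hs1]
        rw [abs_of_neg h] at hx
        have := hy2.1
        nlinarith
    have hk := kest s (x.1 - y.1) (x.2 - y.2) hs hst
    have hxy : x - y = (x.1 - y.1, x.2 - y.2) := rfl
    have hd : Real.exp (-|x.2 - y.2|) ≤ Real.exp R0 * Real.exp (-|x.2|) := by
      rw [← Real.exp_add]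
      apply Real.exp_le_exp.2
      have h1 : |x.2| - |y.2| ≤ |x.2 - y.2| := abs_sub_abs_le_abs_sub _ _
      have h2 : |y.2| ≤ R0 := le_of_lt (abs_lt.2 ⟨hy2.1, hy2.2⟩)
      linarith
    calc ‖F y‖ = |ω y| * ‖K (x - y) - c‖ := by
          rw [hFdef]; rw [norm_smul, Real.norm_eq_abs]
      _ ≤ M * (Real.exp R0 * Real.exp (-|x.2|)) := by
          apply mul_le_mul (hM y) _ (norm_nonneg _) hM0
          rw [hxy]
          exact hk.trans hd
  have hF0 : ∀ y : ℝ × ℝ, R0 ≤ |y.2| → F y = 0 := by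
    intro y hy; rw [hFdef]; simp [hsupp y hy]
  have hg0 : ∀ y : ℝ × ℝ, R0 ≤ |y.2| → g y = 0 := by
    intro y hy; rw [hgdef]; simp [hsupp y hy]
  have hgb : ∀ y ∈ (Ioc (-π) π ×ˢ Ioo (-R0) R0 : Set (ℝ × ℝ)), ‖g y‖ ≤ M * ‖c‖ := by
    intro y _
    rw [hgdef]
    simp only
    rw [norm_smul, Real.norm_eq_abs]
    exact mul_le_mul_of_nonneg_right (hM y) (norm_nonneg _)
  obtain ⟨hFint, hFest⟩ := helper R0 hR0 F hFm _ hFb hF0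
  obtain ⟨hgint, -⟩ := helper R0 hR0 g hgm _ hgb hg0
  obtain ⟨hωint, -⟩ := helper R0 hR0 ω hmeas.aestronglyMeasurable M
    (fun y _ => by rw [Real.norm_eq_abs]; exact hM y) hsupp
  have hmean0 : (∫ y in D2, ω y) = 0 := by
    have hrw : volume.restrict D2 = (volume.restrict (Ioc (-π) π)).prod volume := by
      rw [Measure.restrict_prod_eq_prod_univ, ← Measure.volume_eq_prod]
      rfl
    have hint2 : Integrable ω ((volume.restrict (Ioc (-π) π)).prod volume) := by
      rw [← hrw]; exact hωint
    calc (∫ y in D2, ω y)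
        = ∫ y, ω y ∂((volume.restrict (Ioc (-π) π)).prod volume) := by rw [hrw]
      _ = ∫ y2, ∫ y1 in Ioc (-π) π, ω (y1, y2) := integral_prod_symm ω hint2
      _ = 0 := by
          rw [integral_congr_ae (g := fun _ => (0:ℝ)) hmean, integral_zero]
  have hsplit : (∫ y in D2, ω y • K (x - y)) = (∫ y in D2, F y) + ∫ y in D2, g y := by
    rw [← integral_add hFint hgint]
    apply integral_congr_ae
    apply Filter.Eventually.of_forall
    intro y
    rw [hFdef, hgdef]
    simp only
    rw [← smul_add, sub_add_cancel]
  have hgzero : (∫ y in D2, g y) = 0 := by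
    rw [hgdef]
    simp only
    rw [integral_smul_const, hmean0, zero_smul]
  rw [hsplit, hgzero, add_zero]
  calc ‖∫ y in D2, F y‖ ≤ M * (Real.exp R0 * Real.exp (-|x.2|)) * (2*π*(2*R0)) := hFest
    _ ≤ (4*π*R0*M*Real.exp R0 + 1) * Real.exp (-|x.2|) := by
        nlinarith [Real.exp_pos (-|x.2|)]
end
end
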